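/- arXiv:2604.04378 — 7 statements merged into one kernel-verified Lean document; each statement's English description precedes it below -/
import Mathlib

section
/- A generic matrix X in GL_{2n}(ℝ) can be uniquely decomposed as X = K·R, where K belongs to the subgroup G_- of block lower-triangular matrices [[U,0],[V,W]] with W = J·U·J, and R belongs to the subgroup G_+ of block upper-triangular matrices [[X',Y],[0,Z]] with X' upper triangular invertible and Z upper triangular unipotent. More precisely, the set of X admitting such a decomposition is Zariski-open (contains a dense open subset), and on this set the decomposition is unique. -/
open Matrix

/-- The antidiagonal permutation matrix `J = ∑ E_{i, n+1-i}`. -/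
noncomputable def Jmat (n : ℕ) : Matrix (Fin n) (Fin n) ℝ :=
  fun i j => if (i : ℕ) + (j : ℕ) = n - 1 then 1 else 0

/-- The subgroup `G₊` of block upper-triangular matrices `[[X,Y],[0,Z]]` with `X`
upper triangular and `Z` upper triangular unipotent. -/
def Gplus (n : ℕ) : Set (Matrix (Fin n ⊕ Fin n) (Fin n ⊕ Fin n) ℝ) :=
  { M | IsUnit M ∧ ∃ X Y Z : Matrix (Fin n) (Fin n) ℝ,
      M = fromBlocks X Y 0 Z ∧
      (∀ i j : Fin n, j < i → X i j = 0) ∧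
      (∀ i j : Fin n, j < i → Z i j = 0) ∧ (∀ i : Fin n, Z i i = 1) }

/-- The subgroup `G₋` of block lower-triangular matrices `[[U,0],[V,W]]` with `W = JUJ`. -/
noncomputable def Gminus (n : ℕ) : Set (Matrix (Fin n ⊕ Fin n) (Fin n ⊕ Fin n) ℝ) :=
  { M | IsUnit M ∧ ∃ U V : Matrix (Fin n) (Fin n) ℝ,
      M = fromBlocks U 0 V (Jmat n * U * Jmat n) }



/-- generic antidiagonal matrix over any ring -/
def JG (R : Type*) [Zero R] [One R] (n : ℕ) : Matrix (Fin n) (Fin n) R :=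
  fun i j => if (i : ℕ) + (j : ℕ) = n - 1 then 1 else 0

section Jlemmas
variable {R : Type*} [CommRing R] {n : ℕ}

lemma JG_apply_left (i j : Fin n) : JG R n i j = if j = Fin.rev i then 1 else 0 := by
  have h : ((i : ℕ) + (j : ℕ) = n - 1) ↔ j = Fin.rev i := by
    rw [Fin.ext_iff, Fin.val_rev]
    omega
  simp only [JG, h]

lemma JG_apply_right (i j : Fin n) : JG R n i j = if i = Fin.rev j then 1 else 0 := by
  have h : ((i : ℕ) + (j : ℕ) = n - 1) ↔ i = Fin.rev j := by
    rw [Fin.ext_iff, Fin.val_rev]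
    omega
  simp only [JG, h]

lemma JG_mul_apply (M : Matrix (Fin n) (Fin n) R) (i j : Fin n) :
    (JG R n * M) i j = M (Fin.rev i) j := by
  rw [mul_apply]
  rw [Finset.sum_eq_single (Fin.rev i)]
  · rw [JG_apply_left]; simp
  · intro k _ hk
    rw [JG_apply_left, if_neg hk, zero_mul]
  · simp

lemma mul_JG_apply (M : Matrix (Fin n) (Fin n) R) (i j : Fin n) :
    (M * JG R n) i j = M i (Fin.rev j) := by
  rw [mul_apply]
  rw [Finset.sum_eq_single (Fin.rev j)]
  · rw [JG_apply_right]; simp [Fin.rev_rev]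
  · intro k _ hk
    rw [JG_apply_right, if_neg, mul_zero]
    intro h; exact hk h
  · simp

lemma JG_conj_apply (M : Matrix (Fin n) (Fin n) R) (i j : Fin n) :
    (JG R n * M * JG R n) i j = M (Fin.rev i) (Fin.rev j) := by
  rw [mul_JG_apply, JG_mul_apply]

lemma JG_mul_JG : JG R n * JG R n = (1 : Matrix (Fin n) (Fin n) R) := by
  ext i j
  rw [JG_mul_apply, JG_apply_left, Fin.rev_rev, one_apply]
  by_cases h : j = i
  · subst h; simp
  · rw [if_neg h, if_neg (Ne.symm h)]

end Jlemmas

section Tri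
variable {N : ℕ} (M : Matrix (Fin N) (Fin N) ℝ)

/-- upper triangular predicate matching `Gplus` -/
def UT := ∀ i j : Fin N, j < i → M i j = 0
/-- lower triangular predicate -/
def LoT := ∀ i j : Fin N, i < j → M i j = 0

variable {M}

lemma UT.bt (h : UT M) : M.BlockTriangular id := fun i j hij => h i j hij

lemma LoT.bt (h : LoT M) : M.BlockTriangular (OrderDual.toDual : Fin N → (Fin N)ᵒᵈ) :=
  fun i j hij => h i j hij

lemma UT.det (h : UT M) : M.det = ∏ i, M i i := det_of_upperTriangular h.bt

lemma LoT.det (h : LoT M) : M.det = ∏ i, M i i := det_of_lowerTriangular M h.bt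

lemma diag_mul_UT {A B : Matrix (Fin N) (Fin N) ℝ} (hA : UT A) (hB : UT B) (i : Fin N) :
    (A * B) i i = A i i * B i i := by
  rw [mul_apply]
  apply Finset.sum_eq_single i
  · intro k _ hk
    rcases lt_or_gt_of_ne hk with h | h
    · rw [hA i k h, zero_mul]
    · rw [hB k i h, mul_zero]
  · simp

lemma diag_mul_LoT {A B : Matrix (Fin N) (Fin N) ℝ} (hA : LoT A) (hB : LoT B) (i : Fin N) :
    (A * B) i i = A i i * B i i := by
  rw [mul_apply]
  apply Finset.sum_eq_single i
  · intro k _ hk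
    rcases lt_or_gt_of_ne hk with h | h
    · rw [hB k i h, mul_zero]
    · rw [hA i k h, zero_mul]
  · simp

lemma UT.mul {A B : Matrix (Fin N) (Fin N) ℝ} (hA : UT A) (hB : UT B) : UT (A * B) :=
  fun i j hij => hA.bt.mul hB.bt hij

lemma LoT.mul {A B : Matrix (Fin N) (Fin N) ℝ} (hA : LoT A) (hB : LoT B) : LoT (A * B) :=
  fun i j hij => hA.bt.mul hB.bt hij

lemma UT.inv (h : UT M) (hdet : M.det ≠ 0) : UT M⁻¹ := by
  letI := M.invertibleOfIsUnitDet (isUnit_iff_ne_zero.2 hdet)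
  exact fun i j hij => blockTriangular_inv_of_blockTriangular h.bt hij

lemma LoT.inv (h : LoT M) (hdet : M.det ≠ 0) : LoT M⁻¹ := by
  letI := M.invertibleOfIsUnitDet (isUnit_iff_ne_zero.2 hdet)
  exact fun i j hij => blockTriangular_inv_of_blockTriangular h.bt hij

lemma UT.det_one (h : UT M) (hd : ∀ i, M i i = 1) : M.det = 1 := by
  rw [h.det]; simp [hd]

lemma LoT.det_one (h : LoT M) (hd : ∀ i, M i i = 1) : M.det = 1 := by
  rw [h.det]; simp [hd]

lemma UT.inv_diag_one (h : UT M) (hd : ∀ i, M i i = 1) (i : Fin N) : M⁻¹ i i = 1 := by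
  have hdet : M.det ≠ 0 := by rw [h.det_one hd]; exact one_ne_zero
  have h1 : (M * M⁻¹) i i = 1 := by
    rw [mul_nonsing_inv _ (isUnit_iff_ne_zero.2 hdet), one_apply_eq]
  rwa [diag_mul_UT h (h.inv hdet), hd, one_mul] at h1

lemma LoT.inv_diag_one (h : LoT M) (hd : ∀ i, M i i = 1) (i : Fin N) : M⁻¹ i i = 1 := by
  have hdet : M.det ≠ 0 := by rw [h.det_one hd]; exact one_ne_zero
  have h1 : (M * M⁻¹) i i = 1 := by
    rw [mul_nonsing_inv _ (isUnit_iff_ne_zero.2 hdet), one_apply_eq]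
  rwa [diag_mul_LoT h (h.inv hdet), hd, one_mul] at h1

end Tri

section LU
open Matrix

/-- leading principal minors condition -/
def Minors {m : ℕ} (N : Matrix (Fin m) (Fin m) ℝ) : Prop :=
  ∀ (k : ℕ) (h : k ≤ m), (N.submatrix (Fin.castLE h) (Fin.castLE h)).det ≠ 0

lemma minors_self {m : ℕ} {N : Matrix (Fin m) (Fin m) ℝ} (h : Minors N) : N.det ≠ 0 := by
  have := h m le_rfl
  have he : N.submatrix (Fin.castLE le_rfl) (Fin.castLE le_rfl) = N := by
    ext i j; rfl
  rwa [he] at this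

lemma lu_exists : ∀ (m : ℕ) (N : Matrix (Fin m) (Fin m) ℝ), Minors N →
    ∃ L P : Matrix (Fin m) (Fin m) ℝ,
      LoT L ∧ (∀ i, L i i = 1) ∧ UT P ∧ P.det ≠ 0 ∧ N = L * P := by
  intro m
  induction m with
  | zero =>
    intro N _
    refine ⟨1, N, ?_, ?_, ?_, ?_, ?_⟩
    · intro i; exact i.elim0
    · intro i; exact i.elim0
    · intro i; exact i.elim0
    · rw [det_fin_zero]; exact one_ne_zero
    · rw [one_mul]
  | succ m IH =>
    intro N hmin
    -- split off last row/column
    set N₁ : Matrix (Fin m) (Fin m) ℝ := N.submatrix Fin.castSucc Fin.castSucc with hN₁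
    have hcast : ∀ (k : ℕ) (hk : k ≤ m), (Fin.castSucc ∘ Fin.castLE hk) =
        Fin.castLE (hk.trans (Nat.le_succ m)) := by
      intro k hk; funext x; apply Fin.ext; rfl
    have hminN₁ : Minors N₁ := by
      intro k hk
      rw [hN₁, submatrix_submatrix, hcast]
      exact hmin k (hk.trans (Nat.le_succ m))
    have hdetN₁ : N₁.det ≠ 0 := by
      have := hmin m (Nat.le_succ m)
      have he : N.submatrix (Fin.castLE (Nat.le_succ m)) (Fin.castLE (Nat.le_succ m)) = N₁ := by
        ext i j; rfl
      rwa [he] at this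
    obtain ⟨L₁, P₁, hL₁lo, hL₁d, hP₁u, hP₁det, hLU₁⟩ := IH N₁ hminN₁
    have hL₁det : L₁.det ≠ 0 := by rw [hL₁lo.det_one hL₁d]; exact one_ne_zero
    have hL₁unit : IsUnit L₁.det := isUnit_iff_ne_zero.2 hL₁det
    have hN₁unit : IsUnit N₁.det := isUnit_iff_ne_zero.2 hdetN₁
    set b : Matrix (Fin m) (Fin 1) ℝ := fun i _ => N i.castSucc (Fin.last m) with hb
    set c : Matrix (Fin 1) (Fin m) ℝ := fun _ j => N (Fin.last m) j.castSucc with hc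
    set d : Matrix (Fin 1) (Fin 1) ℝ := fun _ _ => N (Fin.last m) (Fin.last m) with hd
    set e : Fin m ⊕ Fin 1 ≃ Fin (m + 1) := finSumFinEquiv with he
    have hesum : ∀ i' : Fin m ⊕ Fin 1, e i' = Sum.elim Fin.castSucc (fun _ => Fin.last m) i' := by
      intro i'
      rcases i' with i | i
      · rfl
      · have : i = 0 := Subsingleton.elim _ _
        subst this
        apply Fin.ext
        simp [he, finSumFinEquiv]
    have hkey : N.submatrix e e = fromBlocks N₁ b c d := by
      ext i' j'
      rcases i' with i | i <;> rcases j' with j | j <;>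
        simp [hesum, fromBlocks, hN₁, hb, hc, hd]
    set Lb : Matrix (Fin m ⊕ Fin 1) (Fin m ⊕ Fin 1) ℝ :=
      fromBlocks L₁ 0 (c * N₁⁻¹ * L₁) 1 with hLb
    set Pb : Matrix (Fin m ⊕ Fin 1) (Fin m ⊕ Fin 1) ℝ :=
      fromBlocks P₁ (L₁⁻¹ * b) 0 (d - c * N₁⁻¹ * b) with hPb
    have hprod : Lb * Pb = fromBlocks N₁ b c d := by
      rw [hLb, hPb, fromBlocks_multiply]
      have h1 : L₁ * (L₁⁻¹ * b) = b := by
        rw [← Matrix.mul_assoc, mul_nonsing_inv _ hL₁unit, Matrix.one_mul]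
      have h2 : c * N₁⁻¹ * L₁ * P₁ = c := by
        rw [Matrix.mul_assoc (c * N₁⁻¹), ← hLU₁, Matrix.mul_assoc,
          nonsing_inv_mul _ hN₁unit, Matrix.mul_one]
      have h3 : c * N₁⁻¹ * L₁ * (L₁⁻¹ * b) = c * N₁⁻¹ * b := by
        rw [Matrix.mul_assoc (c * N₁⁻¹), ← Matrix.mul_assoc L₁,
          mul_nonsing_inv _ hL₁unit, Matrix.one_mul]
      simp only [Matrix.zero_mul, Matrix.mul_zero, Matrix.one_mul, add_zero, zero_add,
        h1, h2, h3, ← hLU₁, add_sub_cancel]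
    refine ⟨Lb.submatrix e.symm e.symm, Pb.submatrix e.symm e.symm, ?_, ?_, ?_, ?_, ?_⟩
    · -- lower triangular
      intro i j hij
      rw [show i = e (e.symm i) from (e.apply_symm_apply i).symm,
        show j = e (e.symm j) from (e.apply_symm_apply j).symm] at hij
      rw [submatrix_apply]
      generalize e.symm i = i' at *
      generalize e.symm j = j' at *
      rcases i' with a | a <;> rcases j' with c' | c'
      · rw [hesum, hesum] at hij
        simp only [Sum.elim_inl, Fin.castSucc_lt_castSucc_iff] at hij
        exact hL₁lo a c' hij
      · rfl
      · exact absurd hij (by rw [hesum, hesum]; simp [Fin.le_last, not_lt])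
      · exact absurd hij (by rw [hesum, hesum]; simp)
    · -- unit diagonal
      intro i
      rw [submatrix_apply]
      rcases h' : e.symm i with a | a
      · exact hL₁d a
      · simp [hLb, fromBlocks]
    · -- upper triangular
      intro i j hij
      rw [show i = e (e.symm i) from (e.apply_symm_apply i).symm,
        show j = e (e.symm j) from (e.apply_symm_apply j).symm] at hij
      rw [submatrix_apply]
      generalize e.symm i = i' at *
      generalize e.symm j = j' at *
      rcases i' with a | a <;> rcases j' with c' | c'
      · rw [hesum, hesum] at hij
        simp only [Sum.elim_inl, Fin.castSucc_lt_castSucc_iff] at hij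
        exact hP₁u a c' hij
      · exact absurd hij (by rw [hesum, hesum]; simp [Fin.le_last, not_lt])
      · rfl
      · exact absurd hij (by rw [hesum, hesum]; simp)
    · -- det ≠ 0
      rw [det_submatrix_equiv_self e.symm, hPb, det_fromBlocks_zero₂₁]
      apply mul_ne_zero hP₁det
      -- det (d - c N₁⁻¹ b) ≠ 0  from det N ≠ 0
      letI := N₁.invertibleOfIsUnitDet hN₁unit
      have hdetN : N.det ≠ 0 := minors_self hmin
      have : N.det = N₁.det * (d - c * N₁⁻¹ * b).det := by
        rw [← det_submatrix_equiv_self e N, hkey, det_fromBlocks₁₁, invOf_eq_nonsing_inv]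
      intro h0
      rw [this, h0, mul_zero] at hdetN
      exact hdetN rfl
    · -- product
      rw [submatrix_mul_equiv Lb Pb _ e.symm _, hprod, ← hkey, submatrix_submatrix]
      have : (e ∘ e.symm) = id := by funext x; simp
      rw [this, submatrix_id_id]

lemma lu_unique {m : ℕ} {L P L' P' : Matrix (Fin m) (Fin m) ℝ}
    (hL : LoT L) (hLd : ∀ i, L i i = 1) (hP : UT P) (hPdet : P.det ≠ 0)
    (hL' : LoT L') (hLd' : ∀ i, L' i i = 1) (hP' : UT P')
    (h : L * P = L' * P') : L = L' ∧ P = P' := by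
  have hLdet' : L'.det ≠ 0 := by rw [hL'.det_one hLd']; exact one_ne_zero
  have hLu' : IsUnit L'.det := isUnit_iff_ne_zero.2 hLdet'
  have hPu : IsUnit P.det := isUnit_iff_ne_zero.2 hPdet
  set W := L'⁻¹ * L with hW
  have hWP : W * P = P' := by
    rw [hW, Matrix.mul_assoc, h, ← Matrix.mul_assoc, nonsing_inv_mul _ hLu', one_mul]
  have hW2 : W = P' * P⁻¹ := by
    rw [← hWP, Matrix.mul_assoc, mul_nonsing_inv _ hPu, Matrix.mul_one]
  have hWlo : LoT W := (hL'.inv hLdet').mul hL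
  have hWd : ∀ i, W i i = 1 := by
    intro i
    rw [hW, diag_mul_LoT (hL'.inv hLdet') hL, hL'.inv_diag_one hLd', hLd, one_mul]
  have hWup : UT W := by rw [hW2]; exact hP'.mul (hP.inv hPdet)
  have hW1 : W = 1 := by
    ext i j
    rcases lt_trichotomy i j with hij | hij | hij
    · rw [hWlo i j hij, one_apply_ne (Fin.ne_of_lt hij)]
    · subst hij; rw [hWd, one_apply_eq]
    · rw [hWup i j hij, one_apply_ne (Fin.ne_of_gt hij)]
  constructor
  · have : L' * W = L := by
      rw [hW, ← Matrix.mul_assoc, mul_nonsing_inv _ hLu', one_mul]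
    rw [← this, hW1, Matrix.mul_one]
  · rw [← hWP, hW1, one_mul]

end LU

section Fgen
open Matrix Polynomial

variable {R S : Type} [CommRing R] [CommRing S] {n : ℕ}

def blkA (X : Matrix (Fin n ⊕ Fin n) (Fin n ⊕ Fin n) R) : Matrix (Fin n) (Fin n) R :=
  X.submatrix Sum.inl Sum.inl
def blkB (X : Matrix (Fin n ⊕ Fin n) (Fin n ⊕ Fin n) R) : Matrix (Fin n) (Fin n) R :=
  X.submatrix Sum.inl Sum.inr
def blkC (X : Matrix (Fin n ⊕ Fin n) (Fin n ⊕ Fin n) R) : Matrix (Fin n) (Fin n) R :=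
  X.submatrix Sum.inr Sum.inl
def blkD (X : Matrix (Fin n ⊕ Fin n) (Fin n ⊕ Fin n) R) : Matrix (Fin n) (Fin n) R :=
  X.submatrix Sum.inr Sum.inr

def schurP (X : Matrix (Fin n ⊕ Fin n) (Fin n ⊕ Fin n) R) : Matrix (Fin n) (Fin n) R :=
  (blkA X).det • blkD X - blkC X * (blkA X).adjugate * blkB X

def Tp (X : Matrix (Fin n ⊕ Fin n) (Fin n ⊕ Fin n) R) : Matrix (Fin n) (Fin n) R :=
  JG R n * schurP X * JG R n

def Mpp (X : Matrix (Fin n ⊕ Fin n) (Fin n ⊕ Fin n) R) : Matrix (Fin n) (Fin n) R :=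
  (Tp X).adjugate * blkA X

noncomputable def Fgen (X : Matrix (Fin n ⊕ Fin n) (Fin n ⊕ Fin n) R) : R :=
  X.det * (blkA X).det *
    ∏ k : Fin n, ((Mpp X).submatrix (Fin.castLE k.isLt) (Fin.castLE k.isLt)).det

/- naturality under ring homomorphisms -/
lemma matrix_map_smul (f : R →+* S) (r : R) (M : Matrix (Fin n) (Fin n) R) :
    (r • M).map f = f r • M.map f := by
  ext i j; simp [Matrix.map_apply, Matrix.smul_apply]

lemma matrix_map_sub (f : R →+* S) (M N : Matrix (Fin n) (Fin n) R) :
    (M - N).map f = M.map f - N.map f := by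
  ext i j; simp [Matrix.map_apply]

lemma matrix_map_adjugate (f : R →+* S) (M : Matrix (Fin n) (Fin n) R) :
    M.adjugate.map f = (M.map f).adjugate := by
  have := RingHom.map_adjugate f M
  rwa [RingHom.mapMatrix_apply, RingHom.mapMatrix_apply] at this

lemma matrix_map_det (f : R →+* S) {m : Type} [Fintype m] [DecidableEq m]
    (M : Matrix m m R) : (M.map f).det = f M.det := (RingHom.map_det f M).symm

lemma JG_map (f : R →+* S) : (JG R n).map f = JG S n := by
  ext i j; simp [JG, Matrix.map_apply, apply_ite f]

lemma schurP_map (f : R →+* S) (X : Matrix (Fin n ⊕ Fin n) (Fin n ⊕ Fin n) R) :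
    schurP (X.map f) = (schurP X).map f := by
  unfold schurP blkA blkB blkC blkD
  rw [Matrix.submatrix_map, Matrix.submatrix_map, Matrix.submatrix_map,
    Matrix.submatrix_map, matrix_map_sub, matrix_map_smul, matrix_map_det,
    Matrix.map_mul, Matrix.map_mul, matrix_map_adjugate]

lemma Mpp_map (f : R →+* S) (X : Matrix (Fin n ⊕ Fin n) (Fin n ⊕ Fin n) R) :
    Mpp (X.map f) = (Mpp X).map f := by
  unfold Mpp Tp blkA
  rw [schurP_map, ← JG_map (n := n) f, ← Matrix.map_mul, ← Matrix.map_mul,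
    ← matrix_map_adjugate, Matrix.submatrix_map, ← Matrix.map_mul]

lemma Fgen_map (f : R →+* S) (X : Matrix (Fin n ⊕ Fin n) (Fin n ⊕ Fin n) R) :
    Fgen (X.map f) = f (Fgen X) := by
  unfold Fgen blkA
  rw [map_mul f, map_mul f, map_prod f]
  rw [← matrix_map_det f X, Matrix.submatrix_map, matrix_map_det f (X.submatrix _ _)]
  congr 1
  apply Finset.prod_congr rfl
  intro k _
  rw [Mpp_map, Matrix.submatrix_map, matrix_map_det]

/- value at the identity -/
lemma blkA_one : blkA (1 : Matrix (Fin n ⊕ Fin n) (Fin n ⊕ Fin n) R) = 1 :=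
  submatrix_one _ Sum.inl_injective

lemma blkD_one : blkD (1 : Matrix (Fin n ⊕ Fin n) (Fin n ⊕ Fin n) R) = 1 :=
  submatrix_one _ Sum.inr_injective

lemma blkB_one : blkB (1 : Matrix (Fin n ⊕ Fin n) (Fin n ⊕ Fin n) R) = 0 := by
  ext i j; exact one_apply_ne (by simp : (Sum.inl i : Fin n ⊕ Fin n) ≠ Sum.inr j)

lemma blkC_one : blkC (1 : Matrix (Fin n ⊕ Fin n) (Fin n ⊕ Fin n) R) = 0 := by
  ext i j; exact one_apply_ne (by simp : (Sum.inr i : Fin n ⊕ Fin n) ≠ Sum.inl j)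

lemma Mpp_one : Mpp (1 : Matrix (Fin n ⊕ Fin n) (Fin n ⊕ Fin n) R) = 1 := by
  unfold Mpp Tp schurP
  rw [blkA_one, blkB_one, blkC_one, blkD_one]
  simp [JG_mul_JG, adjugate_one]

lemma Fgen_one : Fgen (1 : Matrix (Fin n ⊕ Fin n) (Fin n ⊕ Fin n) R) = 1 := by
  unfold Fgen
  rw [blkA_one, Mpp_one, det_one, one_mul, det_one, one_mul]
  apply Finset.prod_eq_one
  intro k _
  rw [submatrix_one _ (Fin.castLE_injective _), det_one]

/- continuity over ℝ -/
lemma Fgen_continuous :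
    Continuous (Fgen : Matrix (Fin n ⊕ Fin n) (Fin n ⊕ Fin n) ℝ → ℝ) := by
  unfold Fgen Mpp Tp schurP blkA blkB blkC blkD
  have hA : Continuous fun X : Matrix (Fin n ⊕ Fin n) (Fin n ⊕ Fin n) ℝ =>
      X.submatrix (Sum.inl : Fin n → Fin n ⊕ Fin n) Sum.inl :=
    continuous_id.matrix_submatrix _ _
  have hB : Continuous fun X : Matrix (Fin n ⊕ Fin n) (Fin n ⊕ Fin n) ℝ =>
      X.submatrix (Sum.inl : Fin n → Fin n ⊕ Fin n) Sum.inr :=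
    continuous_id.matrix_submatrix _ _
  have hC : Continuous fun X : Matrix (Fin n ⊕ Fin n) (Fin n ⊕ Fin n) ℝ =>
      X.submatrix (Sum.inr : Fin n → Fin n ⊕ Fin n) Sum.inl :=
    continuous_id.matrix_submatrix _ _
  have hD : Continuous fun X : Matrix (Fin n ⊕ Fin n) (Fin n ⊕ Fin n) ℝ =>
      X.submatrix (Sum.inr : Fin n → Fin n ⊕ Fin n) Sum.inr :=
    continuous_id.matrix_submatrix _ _
  have hS : Continuous fun X : Matrix (Fin n ⊕ Fin n) (Fin n ⊕ Fin n) ℝ =>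
      (X.submatrix Sum.inl Sum.inl).det • X.submatrix Sum.inr Sum.inr -
        X.submatrix Sum.inr Sum.inl * (X.submatrix Sum.inl Sum.inl).adjugate *
          X.submatrix Sum.inl Sum.inr :=
    (hA.matrix_det.smul hD).sub ((hC.matrix_mul hA.matrix_adjugate).matrix_mul hB)
  have hM : Continuous fun X : Matrix (Fin n ⊕ Fin n) (Fin n ⊕ Fin n) ℝ =>
      (JG ℝ n * ((X.submatrix Sum.inl Sum.inl).det • X.submatrix Sum.inr Sum.inr -
        X.submatrix Sum.inr Sum.inl * (X.submatrix Sum.inl Sum.inl).adjugate *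
          X.submatrix Sum.inl Sum.inr) * JG ℝ n).adjugate * X.submatrix Sum.inl Sum.inl :=
    (((continuous_const.matrix_mul hS).matrix_mul
      continuous_const).matrix_adjugate).matrix_mul hA
  exact (continuous_id.matrix_det.mul hA.matrix_det).mul
    (continuous_finset_prod _ fun k _ => (hM.matrix_submatrix _ _).matrix_det)

/- density of the complement of the zero locus -/
lemma Fgen_dense :
    Dense {X : Matrix (Fin n ⊕ Fin n) (Fin n ⊕ Fin n) ℝ | Fgen X ≠ 0} := by
  rw [dense_iff_inter_open]
  rintro U hU ⟨x₀, hx₀⟩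
  set γ : ℝ → Matrix (Fin n ⊕ Fin n) (Fin n ⊕ Fin n) ℝ :=
    fun t => x₀ + t • ((1 : Matrix (Fin n ⊕ Fin n) (Fin n ⊕ Fin n) ℝ) - x₀) with hγdef
  have hγ : Continuous γ := continuous_const.add (continuous_id.smul continuous_const)
  -- the polynomial
  set Xp : Matrix (Fin n ⊕ Fin n) (Fin n ⊕ Fin n) (Polynomial ℝ) :=
    x₀.map Polynomial.C +
      (Polynomial.X : Polynomial ℝ) •
        ((1 - x₀ : Matrix (Fin n ⊕ Fin n) (Fin n ⊕ Fin n) ℝ).map Polynomial.C) with hXp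
  set p : Polynomial ℝ := Fgen Xp with hp
  have hmapXp : ∀ t : ℝ, Xp.map (Polynomial.evalRingHom t) = γ t := by
    intro t
    ext i j
    simp [hXp, hγdef, Matrix.map_apply, Matrix.add_apply, Matrix.smul_apply,
      Matrix.sub_apply, smul_eq_mul]
  have heval : ∀ t : ℝ, Fgen (γ t) = p.eval t := by
    intro t
    rw [← hmapXp t, Fgen_map (Polynomial.evalRingHom t) Xp]
    rfl
  have hγ1 : γ 1 = 1 := by
    rw [hγdef]; simp
  have hpne : p ≠ 0 := by
    intro h0
    have := heval 1
    rw [hγ1, Fgen_one, h0] at this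
    simp at this
  -- finitely many roots
  have hroots : {t : ℝ | p.IsRoot t}.Finite := p.finite_setOf_isRoot hpne
  -- neighborhood of 0 inside γ ⁻¹' U
  have h0mem : (0 : ℝ) ∈ γ ⁻¹' U := by
    simp only [Set.mem_preimage, hγdef]
    simpa using hx₀
  obtain ⟨ε, hε, hball⟩ := Metric.isOpen_iff.1 (hU.preimage hγ) 0 h0mem
  have hIoo : Set.Ioo (-ε) ε ⊆ γ ⁻¹' U := by
    intro t ht
    apply hball
    rw [Real.ball_eq_Ioo]
    simpa using ht
  have hinf : (Set.Ioo (-ε) ε).Infinite := Set.Ioo_infinite (by linarith : -ε < ε)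
  obtain ⟨t, ht⟩ := (hinf.diff hroots).nonempty
  refine ⟨γ t, hIoo ht.1, ?_⟩
  simp only [Set.mem_setOf_eq, heval t]
  exact ht.2

end Fgen

section Decomp
open Matrix

variable {n : ℕ}

lemma LoT_conj {M : Matrix (Fin n) (Fin n) ℝ} (h : UT M) : LoT (JG ℝ n * M * JG ℝ n) := by
  intro i j hij
  rw [JG_conj_apply]
  exact h _ _ (Fin.rev_lt_rev.mpr hij)

lemma UT_conj {M : Matrix (Fin n) (Fin n) ℝ} (h : LoT M) : UT (JG ℝ n * M * JG ℝ n) := by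
  intro i j hij
  rw [JG_conj_apply]
  exact h _ _ (Fin.rev_lt_rev.mpr hij)

lemma diag_conj (M : Matrix (Fin n) (Fin n) ℝ) (i : Fin n) :
    (JG ℝ n * M * JG ℝ n) i i = M (Fin.rev i) (Fin.rev i) := JG_conj_apply M i i

lemma conj_conj (M : Matrix (Fin n) (Fin n) ℝ) :
    JG ℝ n * (JG ℝ n * M * JG ℝ n) * JG ℝ n = M := by
  simp only [← Matrix.mul_assoc]
  rw [JG_mul_JG, Matrix.one_mul, Matrix.mul_assoc, JG_mul_JG, Matrix.mul_one]

lemma det_JG_sq : (JG ℝ n).det * (JG ℝ n).det = 1 := by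
  rw [← det_mul, JG_mul_JG, det_one]

lemma det_conjJ (M : Matrix (Fin n) (Fin n) ℝ) :
    (JG ℝ n * M * JG ℝ n).det = M.det := by
  rw [det_mul, det_mul]
  calc (JG ℝ n).det * M.det * (JG ℝ n).det
      = (JG ℝ n).det * (JG ℝ n).det * M.det := by ring
    _ = M.det := by rw [det_JG_sq, one_mul]

/-- Any suitably normalized decomposition of the blocks of `X` yields the (unique)
LU decomposition of `Mpp X`. -/
lemma decomp_lu {X : Matrix (Fin n ⊕ Fin n) (Fin n ⊕ Fin n) ℝ}
    {U P Z : Matrix (Fin n) (Fin n) ℝ}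
    (hdA : (blkA X).det ≠ 0)
    (hdU : U.det ≠ 0) (hdP : P.det ≠ 0) (hPu : UT P) (hZu : UT Z) (hZd : ∀ i, Z i i = 1)
    (hA : blkA X = U * P)
    (hSc : blkD X - blkC X * (blkA X)⁻¹ * blkB X = (JG ℝ n * U * JG ℝ n) * Z) :
    Mpp X = (JG ℝ n * Z⁻¹ * JG ℝ n) * (((Tp X).det * (blkA X).det⁻¹) • P) ∧
      LoT (JG ℝ n * Z⁻¹ * JG ℝ n) ∧ (∀ i, (JG ℝ n * Z⁻¹ * JG ℝ n) i i = 1) ∧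
      UT (((Tp X).det * (blkA X).det⁻¹) • P) ∧
      ((((Tp X).det * (blkA X).det⁻¹) • P)).det ≠ 0 ∧ (Tp X).det ≠ 0 := by
  have hAunit : IsUnit (blkA X).det := isUnit_iff_ne_zero.2 hdA
  have hdZ : Z.det = 1 := hZu.det_one hZd
  have hZunit : IsUnit Z.det := by rw [hdZ]; exact isUnit_one
  -- the adjugate identity : schurP X = det A • Sc
  have hadj : (blkA X).adjugate = (blkA X).det • (blkA X)⁻¹ := by
    rw [Matrix.inv_def, smul_smul, Ring.mul_inverse_cancel _ hAunit, one_smul]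
  have hschur : schurP X = (blkA X).det •
      (blkD X - blkC X * (blkA X)⁻¹ * blkB X) := by
    unfold schurP
    rw [hadj, smul_sub]
    congr 1
    rw [Matrix.mul_smul, Matrix.smul_mul]
  -- Tp X = det A • (U * (J Z J))
  have hTp : Tp X = (blkA X).det • (U * (JG ℝ n * Z * JG ℝ n)) := by
    unfold Tp
    rw [hschur, hSc, Matrix.mul_smul, Matrix.smul_mul]
    congr 1
    calc JG ℝ n * (JG ℝ n * U * JG ℝ n * Z) * JG ℝ n
        = (JG ℝ n * JG ℝ n) * U * (JG ℝ n * Z * JG ℝ n) := by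
          simp only [Matrix.mul_assoc]
      _ = U * (JG ℝ n * Z * JG ℝ n) := by rw [JG_mul_JG, Matrix.one_mul]
  -- det Tp ≠ 0
  have hdTp : (Tp X).det ≠ 0 := by
    rw [hTp, det_smul, det_mul, det_conjJ, hdZ, mul_one]
    exact mul_ne_zero (pow_ne_zero _ hdA) hdU
  have hTpunit : IsUnit (Tp X).det := isUnit_iff_ne_zero.2 hdTp
  -- key cancellation : Tp X * (J Z⁻¹ J) = det A • U
  have hcancel : Tp X * (JG ℝ n * Z⁻¹ * JG ℝ n) = (blkA X).det • U := by
    rw [hTp, Matrix.smul_mul]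
    congr 1
    calc U * (JG ℝ n * Z * JG ℝ n) * (JG ℝ n * Z⁻¹ * JG ℝ n)
        = U * (JG ℝ n * (Z * ((JG ℝ n * JG ℝ n) * Z⁻¹)) * JG ℝ n) := by
          simp only [Matrix.mul_assoc]
      _ = U := by
          rw [JG_mul_JG, Matrix.one_mul, mul_nonsing_inv _ hZunit, Matrix.mul_one,
            JG_mul_JG, Matrix.mul_one]
  -- main identity
  have hmain : (Tp X).det • ((JG ℝ n * Z⁻¹ * JG ℝ n) * P) = (blkA X).det • Mpp X := by
    have h1 : Tp X * ((JG ℝ n * Z⁻¹ * JG ℝ n) * P) = (blkA X).det • blkA X := by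
      rw [← Matrix.mul_assoc, hcancel, Matrix.smul_mul, ← hA]
    have h2 : (Tp X).adjugate * (Tp X * ((JG ℝ n * Z⁻¹ * JG ℝ n) * P))
        = (Tp X).adjugate * ((blkA X).det • blkA X) := by rw [h1]
    rw [← Matrix.mul_assoc, adjugate_mul, Matrix.smul_mul, Matrix.one_mul,
      Matrix.mul_smul] at h2
    exact h2
  have hMpp : Mpp X = (JG ℝ n * Z⁻¹ * JG ℝ n) * (((Tp X).det * (blkA X).det⁻¹) • P) := by
    have h3 : (blkA X).det⁻¹ • ((Tp X).det • ((JG ℝ n * Z⁻¹ * JG ℝ n) * P))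
        = (blkA X).det⁻¹ • ((blkA X).det • Mpp X) := by rw [hmain]
    rw [smul_smul, smul_smul, inv_mul_cancel₀ hdA, one_smul] at h3
    rw [← h3, Matrix.mul_smul, mul_comm]
  -- triangularity facts
  have hZinv_u : UT Z⁻¹ := hZu.inv (by rw [hdZ]; exact one_ne_zero)
  have hZinv_d : ∀ i, Z⁻¹ i i = 1 := hZu.inv_diag_one hZd
  refine ⟨hMpp, LoT_conj hZinv_u, ?_, ?_, ?_, hdTp⟩
  · intro i
    rw [diag_conj, hZinv_d]
  · intro i j hij
    rw [Matrix.smul_apply, hPu i j hij, smul_zero]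
  · rw [det_smul]
    exact mul_ne_zero (pow_ne_zero _ (mul_ne_zero hdTp (inv_ne_zero hdA))) hdP

section Main
open Matrix

variable {n : ℕ}

lemma blkA_fromBlocks (a b c d : Matrix (Fin n) (Fin n) ℝ) : blkA (fromBlocks a b c d) = a := by
  ext i j; rfl
lemma blkB_fromBlocks (a b c d : Matrix (Fin n) (Fin n) ℝ) : blkB (fromBlocks a b c d) = b := by
  ext i j; rfl
lemma blkC_fromBlocks (a b c d : Matrix (Fin n) (Fin n) ℝ) : blkC (fromBlocks a b c d) = c := by
  ext i j; rfl
lemma blkD_fromBlocks (a b c d : Matrix (Fin n) (Fin n) ℝ) : blkD (fromBlocks a b c d) = d := by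
  ext i j; rfl

lemma schurP_eq_smul {X : Matrix (Fin n ⊕ Fin n) (Fin n ⊕ Fin n) ℝ}
    (hdA : (blkA X).det ≠ 0) :
    schurP X = (blkA X).det • (blkD X - blkC X * (blkA X)⁻¹ * blkB X) := by
  have hAunit : IsUnit (blkA X).det := isUnit_iff_ne_zero.2 hdA
  have hadj : (blkA X).adjugate = (blkA X).det • (blkA X)⁻¹ := by
    rw [Matrix.inv_def, smul_smul, Ring.mul_inverse_cancel _ hAunit, one_smul]
  unfold schurP
  rw [hadj, smul_sub]
  congr 1
  rw [Matrix.mul_smul, Matrix.smul_mul]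

theorem generic_KR_decomposition' (n : ℕ) (hn : 1 ≤ n) :
    ∃ S : Set (Matrix (Fin n ⊕ Fin n) (Fin n ⊕ Fin n) ℝ),
      IsOpen S ∧ Dense S ∧
      ∀ X ∈ S, ∃! KR : Matrix (Fin n ⊕ Fin n) (Fin n ⊕ Fin n) ℝ ×
          Matrix (Fin n ⊕ Fin n) (Fin n ⊕ Fin n) ℝ,
        KR.1 ∈ Gminus n ∧ KR.2 ∈ Gplus n ∧ X = KR.1 * KR.2 := by
  have hJmat : Jmat n = JG ℝ n := rfl
  refine ⟨{X | Fgen X ≠ 0}, ?_, Fgen_dense, ?_⟩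
  · exact IsOpen.preimage Fgen_continuous isOpen_ne
  intro X hX
  have hfac : X.det * (blkA X).det *
      ∏ k : Fin n, ((Mpp X).submatrix (Fin.castLE k.isLt) (Fin.castLE k.isLt)).det ≠ 0 := hX
  have hdXA := mul_ne_zero_iff.mp hfac
  have hdX : X.det ≠ 0 := (mul_ne_zero_iff.mp hdXA.1).1
  have hdA : (blkA X).det ≠ 0 := (mul_ne_zero_iff.mp hdXA.1).2
  have hAunit : IsUnit (blkA X).det := isUnit_iff_ne_zero.2 hdA
  have hminors : Minors (Mpp X) := by
    intro k hk
    cases k with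
    | zero =>
      rw [det_fin_zero]; exact one_ne_zero
    | succ k' =>
      have hk' : k' < n := hk
      exact Finset.prod_ne_zero_iff.mp hdXA.2 ⟨k', hk'⟩ (Finset.mem_univ _)
  obtain ⟨L, P₀, hLlo, hLd, hP₀u, hP₀det, hLU⟩ := lu_exists n (Mpp X) hminors
  have hLdet : L.det = 1 := hLlo.det_one hLd
  have hLunit : IsUnit L.det := by rw [hLdet]; exact isUnit_one
  -- blocks of X
  have hXb : X = fromBlocks (blkA X) (blkB X) (blkC X) (blkD X) := by
    ext i j; rcases i with i | i <;> rcases j with j | j <;> rfl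
  -- Schur complement determinant
  have hdSc : (blkD X - blkC X * (blkA X)⁻¹ * blkB X).det ≠ 0 := by
    letI := (blkA X).invertibleOfIsUnitDet hAunit
    have hdet : X.det = (blkA X).det * (blkD X - blkC X * (blkA X)⁻¹ * blkB X).det := by
      conv_lhs => rw [hXb]
      rw [det_fromBlocks₁₁, invOf_eq_nonsing_inv]
    intro h0
    rw [hdet, h0, mul_zero] at hdX
    exact hdX rfl
  have hschur := schurP_eq_smul hdA
  have hdTp : (Tp X).det ≠ 0 := by
    unfold Tp
    rw [det_conjJ, hschur, det_smul]
    exact mul_ne_zero (pow_ne_zero _ hdA) hdSc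
  have hTpunit : IsUnit (Tp X).det := isUnit_iff_ne_zero.2 hdTp
  -- the witness decomposition
  obtain ⟨U, hUdef⟩ : ∃ M, M = (blkA X).det⁻¹ • (Tp X * L) := ⟨_, rfl⟩
  obtain ⟨P, hPdef⟩ : ∃ M, M = ((blkA X).det * (Tp X).det⁻¹) • P₀ := ⟨_, rfl⟩
  have hTpMpp : Tp X * (L * P₀) = (Tp X).det • blkA X := by
    rw [← hLU]
    unfold Mpp
    rw [← Matrix.mul_assoc, mul_adjugate, Matrix.smul_mul, Matrix.one_mul]
  have hUP : U * P = blkA X := by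
    rw [hUdef, hPdef, Matrix.smul_mul, Matrix.mul_smul, smul_smul, ← mul_assoc,
      inv_mul_cancel₀ hdA, one_mul, Matrix.mul_assoc, hTpMpp, smul_smul,
      inv_mul_cancel₀ hdTp, one_smul]
  have hdU : U.det ≠ 0 := by
    rw [hUdef, det_smul, det_mul, hLdet, mul_one]
    exact mul_ne_zero (pow_ne_zero _ (inv_ne_zero hdA)) hdTp
  have hUunit : IsUnit U.det := isUnit_iff_ne_zero.2 hdU
  have hdP : P.det ≠ 0 := by
    rw [hPdef, det_smul]
    exact mul_ne_zero (pow_ne_zero _ (mul_ne_zero hdA (inv_ne_zero hdTp))) hP₀det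
  have hPunit : IsUnit P.det := isUnit_iff_ne_zero.2 hdP
  have hPu : UT P := by
    intro i j hij
    rw [hPdef, Matrix.smul_apply, hP₀u i j hij, smul_zero]
  -- Z
  have hJLJ_u : UT (JG ℝ n * L * JG ℝ n) := UT_conj hLlo
  have hJLJ_d : ∀ i, (JG ℝ n * L * JG ℝ n) i i = 1 := by
    intro i; rw [diag_conj]; exact hLd _
  have hdJLJ : (JG ℝ n * L * JG ℝ n).det = 1 := hJLJ_u.det_one hJLJ_d
  obtain ⟨Z, hZdef⟩ : ∃ M, M = (JG ℝ n * L * JG ℝ n)⁻¹ := ⟨_, rfl⟩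
  have hZu : UT Z := by rw [hZdef]; exact hJLJ_u.inv (by rw [hdJLJ]; exact one_ne_zero)
  have hZd : ∀ i, Z i i = 1 := by rw [hZdef]; exact hJLJ_u.inv_diag_one hJLJ_d
  have hdZ : Z.det = 1 := hZu.det_one hZd
  have hZunit : IsUnit Z.det := by rw [hdZ]; exact isUnit_one
  have hJLJinv : (JG ℝ n * L * JG ℝ n)⁻¹ = JG ℝ n * L⁻¹ * JG ℝ n := by
    apply inv_eq_right_inv
    calc (JG ℝ n * L * JG ℝ n) * (JG ℝ n * L⁻¹ * JG ℝ n)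
        = JG ℝ n * (L * ((JG ℝ n * JG ℝ n) * L⁻¹)) * JG ℝ n := by
          simp only [Matrix.mul_assoc]
      _ = 1 := by
          rw [JG_mul_JG, Matrix.one_mul, mul_nonsing_inv _ hLunit, Matrix.mul_one, JG_mul_JG]
  have hUL : U * L⁻¹ = (blkA X).det⁻¹ • Tp X := by
    rw [hUdef, Matrix.smul_mul, Matrix.mul_assoc, mul_nonsing_inv _ hLunit, Matrix.mul_one]
  have hWZ : (JG ℝ n * U * JG ℝ n) * Z = blkD X - blkC X * (blkA X)⁻¹ * blkB X := by
    rw [hZdef, hJLJinv]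
    calc (JG ℝ n * U * JG ℝ n) * (JG ℝ n * L⁻¹ * JG ℝ n)
        = JG ℝ n * (U * ((JG ℝ n * JG ℝ n) * L⁻¹)) * JG ℝ n := by
          simp only [Matrix.mul_assoc]
      _ = JG ℝ n * (U * L⁻¹) * JG ℝ n := by rw [JG_mul_JG, Matrix.one_mul]
      _ = blkD X - blkC X * (blkA X)⁻¹ * blkB X := by
          rw [hUL, Matrix.mul_smul, Matrix.smul_mul]
          have : JG ℝ n * Tp X * JG ℝ n = schurP X := conj_conj _
          rw [this, hschur, smul_smul, inv_mul_cancel₀ hdA, one_smul]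
  obtain ⟨Q, hQdef⟩ : ∃ M, M = U⁻¹ * blkB X := ⟨_, rfl⟩
  obtain ⟨V, hVdef⟩ : ∃ M, M = blkC X * P⁻¹ := ⟨_, rfl⟩
  -- the product identity  X = K * R
  have hCAB : blkC X * (blkA X)⁻¹ * blkB X = (blkC X * P⁻¹) * (U⁻¹ * blkB X) := by
    rw [← hUP, Matrix.mul_inv_rev]
    simp only [Matrix.mul_assoc]
  have hXKR : X = fromBlocks U 0 V (JG ℝ n * U * JG ℝ n) * fromBlocks P Q 0 Z := by
    rw [fromBlocks_multiply]
    have e1 : U * P + 0 * 0 = blkA X := by rw [Matrix.zero_mul, add_zero, hUP]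
    have e2 : U * Q + 0 * Z = blkB X := by
      rw [Matrix.zero_mul, add_zero, hQdef, ← Matrix.mul_assoc,
        mul_nonsing_inv _ hUunit, Matrix.one_mul]
    have e3 : V * P + (JG ℝ n * U * JG ℝ n) * 0 = blkC X := by
      rw [Matrix.mul_zero, add_zero, hVdef, Matrix.mul_assoc,
        nonsing_inv_mul _ hPunit, Matrix.mul_one]
    have e4 : V * Q + (JG ℝ n * U * JG ℝ n) * Z = blkD X := by
      rw [hVdef, hQdef, hWZ, ← hCAB, add_sub_cancel]
    rw [e1, e2, e3, e4]
    exact hXb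
  -- units
  have hdK : (fromBlocks U 0 V (JG ℝ n * U * JG ℝ n)).det ≠ 0 := by
    rw [det_fromBlocks_zero₁₂, det_conjJ]
    exact mul_ne_zero hdU hdU
  have hdR : (fromBlocks P Q 0 Z).det ≠ 0 := by
    rw [det_fromBlocks_zero₂₁, hdZ, mul_one]
    exact hdP
  refine ⟨⟨fromBlocks U 0 V (JG ℝ n * U * JG ℝ n), fromBlocks P Q 0 Z⟩, ⟨?_, ?_, hXKR⟩, ?_⟩
  · exact ⟨(isUnit_iff_isUnit_det _).mpr (isUnit_iff_ne_zero.2 hdK), U, V, by rw [hJmat]⟩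
  · exact ⟨(isUnit_iff_isUnit_det _).mpr (isUnit_iff_ne_zero.2 hdR), P, Q, Z, rfl, hPu, hZu, hZd⟩
  -- uniqueness
  rintro ⟨K', R'⟩ ⟨⟨hKu', U', V', rfl⟩, ⟨hRu', P', Q', Z', rfl, hPu', hZu', hZd'⟩, hXKR'⟩
  rw [hJmat] at hXKR' hKu' ⊢
  -- invertibility of the blocks
  have hdU' : U'.det ≠ 0 := by
    have h := (isUnit_iff_isUnit_det _).mp hKu'
    rw [det_fromBlocks_zero₁₂, det_conjJ] at h
    intro h0
    rw [h0, mul_zero] at h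
    exact (by simpa using h : ¬ IsUnit (0 : ℝ)) h
  have hU'unit : IsUnit U'.det := isUnit_iff_ne_zero.2 hdU'
  have hdZ' : Z'.det = 1 := UT.det_one hZu' hZd'
  have hdP' : P'.det ≠ 0 := by
    have h := (isUnit_iff_isUnit_det _).mp hRu'
    rw [det_fromBlocks_zero₂₁, hdZ', mul_one] at h
    exact h.ne_zero
  have hP'unit : IsUnit P'.det := isUnit_iff_ne_zero.2 hdP'
  -- block equations
  have hXb' : X = fromBlocks (U' * P') (U' * Q') (V' * P')
      (V' * Q' + (JG ℝ n * U' * JG ℝ n) * Z') := by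
    rw [hXKR', fromBlocks_multiply]
    simp only [Matrix.zero_mul, Matrix.mul_zero, add_zero, zero_add]
  have hA' : blkA X = U' * P' := by rw [hXb', blkA_fromBlocks]
  have hB' : blkB X = U' * Q' := by rw [hXb', blkB_fromBlocks]
  have hC' : blkC X = V' * P' := by rw [hXb', blkC_fromBlocks]
  have hD' : blkD X = V' * Q' + (JG ℝ n * U' * JG ℝ n) * Z' := by rw [hXb', blkD_fromBlocks]
  have hCAB' : blkC X * (blkA X)⁻¹ * blkB X = V' * Q' := by
    rw [hC', hA', hB', Matrix.mul_inv_rev]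
    have h1 : V' * P' * (P'⁻¹ * U'⁻¹) = V' * U'⁻¹ := by
      rw [Matrix.mul_assoc V', ← Matrix.mul_assoc P', mul_nonsing_inv _ hP'unit,
        Matrix.one_mul]
    rw [h1, Matrix.mul_assoc V', ← Matrix.mul_assoc U'⁻¹, nonsing_inv_mul _ hU'unit,
      Matrix.one_mul]
  have hSc' : blkD X - blkC X * (blkA X)⁻¹ * blkB X = (JG ℝ n * U' * JG ℝ n) * Z' := by
    rw [hD', hCAB', add_sub_cancel_left]
  -- two LU decompositions of Mpp X
  obtain ⟨hlu1, hlo1, hld1, hut1, hdp1, -⟩ :=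
    decomp_lu (X := X) hdA hdU hdP hPu hZu hZd hUP.symm hWZ.symm
  obtain ⟨hlu2, hlo2, hld2, hut2, hdp2, -⟩ :=
    decomp_lu (X := X) hdA hdU' hdP' hPu' hZu' hZd' hA' hSc'
  obtain ⟨hLeq, hPeq⟩ := lu_unique hlo1 hld1 hut1 hdp1 hlo2 hld2 hut2 (hlu1.symm.trans hlu2)
  -- recover the equalities of the blocks
  have hZZ' : Z'⁻¹ = Z⁻¹ := by
    have h := congrArg (fun M => JG ℝ n * M * JG ℝ n) hLeq
    simp only [conj_conj] at h
    exact h.symm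
  have hZeq : Z' = Z := by
    rw [← nonsing_inv_nonsing_inv Z' (by rw [hdZ']; exact isUnit_one), hZZ',
      nonsing_inv_nonsing_inv Z hZunit]
  have hsc : (Tp X).det * (blkA X).det⁻¹ ≠ 0 :=
    mul_ne_zero hdTp (inv_ne_zero hdA)
  have hPeq' : P = P' := by
    have h := congrArg (fun M => ((Tp X).det * (blkA X).det⁻¹)⁻¹ • M) hPeq
    simp only [smul_smul, inv_mul_cancel₀ hsc, one_smul] at h
    exact h
  have hUeq : U = U' := by
    have h : U * P = U' * P := by rw [hUP, hA', ← hPeq']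
    have h2 := congrArg (fun M => M * P⁻¹) h
    simp only [Matrix.mul_assoc, mul_nonsing_inv _ hPunit, Matrix.mul_one] at h2
    exact h2
  have hVeq : V = V' := by
    rw [hVdef, hC', ← hPeq', Matrix.mul_assoc, mul_nonsing_inv _ hPunit, Matrix.mul_one]
  have hQeq : Q = Q' := by
    rw [hQdef, hB', ← hUeq, ← Matrix.mul_assoc, nonsing_inv_mul _ hUunit, Matrix.one_mul]
  simp only [Prod.mk.injEq]
  constructor
  · rw [← hUeq, ← hVeq]
  · rw [← hPeq', ← hQeq, ← hZeq]

end Main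

/-- A generic `X ∈ GL_{2n}(ℝ)` admits a unique decomposition `X = K·R`, `K ∈ G₋`, `R ∈ G₊`:
the set of such `X` contains a dense open set, on which the decomposition is unique. -/
theorem generic_KR_decomposition (n : ℕ) (hn : 1 ≤ n) :
    ∃ S : Set (Matrix (Fin n ⊕ Fin n) (Fin n ⊕ Fin n) ℝ),
      IsOpen S ∧ Dense S ∧
      ∀ X ∈ S, ∃! KR : Matrix (Fin n ⊕ Fin n) (Fin n ⊕ Fin n) ℝ ×
          Matrix (Fin n ⊕ Fin n) (Fin n ⊕ Fin n) ℝ,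
        KR.1 ∈ Gminus n ∧ KR.2 ∈ Gplus n ∧ X = KR.1 * KR.2 := by
  exact generic_KR_decomposition' n hn
end Decomp
end

section
/- If X = [[A,0],[B,C]] is an invertible block lower-triangular 2n×2n matrix with A, C lower triangular, and the matrix C^{-1}·J·A·J admits a Gauss decomposition C^{-1}JAJ = R₂·U₂ with R₂ upper triangular unipotent and U₂ lower triangular, then setting U = A·J·U₂^{-1}·J, V = B·J·U₂^{-1}·J, W = C·R₂, P = J·U₂·J, Q = R₂^{-1}, one has X = [[U,0],[V,W]]·[[P,0],[0,Q]], where W = J·U·J (so the first factor lies in G_-) and the second factor lies in G_+. -/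
open Matrix

lemma Jmat_apply (n : ℕ) (i j : Fin n) : Jmat n i j = if j = Fin.rev i then 1 else 0 := by
  unfold Jmat
  congr 1
  simp only [eq_iff_iff]
  constructor
  · intro h
    have := i.isLt
    ext
    simp only [Fin.rev]
    omega
  · intro h
    subst h
    simp only [Fin.rev]
    omega

lemma Jmat_mul {n : ℕ} (M : Matrix (Fin n) (Fin n) ℝ) :
    Jmat n * M = M.submatrix Fin.rev id := by
  ext i j
  rw [mul_apply]
  simp only [Jmat_apply, ite_mul, one_mul, zero_mul, submatrix_apply, id]
  rw [Finset.sum_ite_eq' _ (Fin.rev i) (fun k => M k j)]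
  simp

lemma mul_Jmat {n : ℕ} (M : Matrix (Fin n) (Fin n) ℝ) :
    M * Jmat n = M.submatrix id Fin.rev := by
  ext i j
  rw [mul_apply]
  have : ∀ k : Fin n, Jmat n k j = if k = Fin.rev j then 1 else 0 := by
    intro k
    rw [Jmat_apply]
    congr 1
    simp only [eq_iff_iff]
    constructor
    · intro h; subst h; simp
    · intro h; subst h; simp
  simp only [this, mul_ite, mul_one, mul_zero, submatrix_apply, id]
  rw [Finset.sum_ite_eq' _ (Fin.rev j) (fun k => M i k)]
  simp

lemma Jmat_mul_Jmat (n : ℕ) : Jmat n * Jmat n = 1 := by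
  rw [Jmat_mul]
  ext i j
  simp only [submatrix_apply, id, Jmat_apply, one_apply]
  congr 1
  simp only [eq_iff_iff]
  constructor
  · intro h; simpa using congrArg Fin.rev h.symm
  · intro h; subst h; simp

/-- If `X = [[A,0],[B,C]]` is invertible block lower-triangular with `A, C` lower
triangular, and `C⁻¹ J A J = R₂ U₂` is a Gauss decomposition (`R₂` upper unipotent,
`U₂` lower triangular), then `X = [[U,0],[V,W]]·[[P,0],[0,Q]]` with
`U = A J U₂⁻¹ J`, `V = B J U₂⁻¹ J`, `W = C R₂ = J U J`, `P = J U₂ J`, `Q = R₂⁻¹`,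
the first factor lying in `G₋` and the second in `G₊`. -/
theorem KR_decomposition_lower_triangular (n : ℕ) (hn : 1 ≤ n)
    (A B C R₂ U₂ : Matrix (Fin n) (Fin n) ℝ)
    (hX : IsUnit (fromBlocks A 0 B C))
    (hA : ∀ i j : Fin n, i < j → A i j = 0)
    (hC : ∀ i j : Fin n, i < j → C i j = 0)
    (hCunit : IsUnit C) (hU₂unit : IsUnit U₂)
    (hR₂ : ∀ i j : Fin n, j < i → R₂ i j = 0) (hR₂diag : ∀ i : Fin n, R₂ i i = 1)
    (hU₂ : ∀ i j : Fin n, i < j → U₂ i j = 0)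
    (hGauss : C⁻¹ * (Jmat n * A * Jmat n) = R₂ * U₂) :
    (fromBlocks A 0 B C =
        fromBlocks (A * Jmat n * U₂⁻¹ * Jmat n) 0 (B * Jmat n * U₂⁻¹ * Jmat n) (C * R₂) *
        fromBlocks (Jmat n * U₂ * Jmat n) 0 0 R₂⁻¹) ∧
      C * R₂ = Jmat n * (A * Jmat n * U₂⁻¹ * Jmat n) * Jmat n ∧
      (∀ i j : Fin n, j < i → (Jmat n * U₂ * Jmat n) i j = 0) ∧
      (∀ i j : Fin n, j < i → R₂⁻¹ i j = 0) ∧ (∀ i : Fin n, R₂⁻¹ i i = 1) := by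
  have hJJ := Jmat_mul_Jmat n
  have hU₂det : IsUnit U₂.det := (isUnit_iff_isUnit_det U₂).mp hU₂unit
  have hCdet : IsUnit C.det := (isUnit_iff_isUnit_det C).mp hCunit
  have hR₂bt : BlockTriangular R₂ id := fun i j h => hR₂ i j h
  have hR₂det : IsUnit R₂.det := by
    rw [det_of_upperTriangular hR₂bt]
    simp [hR₂diag]
  haveI : Invertible R₂ := R₂.invertibleOfIsUnitDet hR₂det
  have hinvR : R₂⁻¹.BlockTriangular id := blockTriangular_inv_of_blockTriangular hR₂bt
  have hRRinv : R₂ * R₂⁻¹ = 1 := mul_nonsing_inv R₂ hR₂det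
  -- cancellation lemma
  have hcancel : ∀ M : Matrix (Fin n) (Fin n) ℝ,
      M * Jmat n * U₂⁻¹ * Jmat n * (Jmat n * U₂ * Jmat n) = M := by
    intro M
    simp only [mul_assoc]
    rw [← mul_assoc (Jmat n) (Jmat n), hJJ, one_mul,
      ← mul_assoc U₂⁻¹ U₂, nonsing_inv_mul U₂ hU₂det, one_mul, hJJ, mul_one]
  have hJAJ : Jmat n * A * Jmat n = C * (R₂ * U₂) := by
    rw [← hGauss, mul_nonsing_inv_cancel_left C _ hCdet]
  refine ⟨?_, ?_, ?_, ?_, ?_⟩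
  · rw [fromBlocks_multiply]
    simp only [Matrix.mul_zero, Matrix.zero_mul, add_zero, zero_add]
    rw [hcancel, hcancel, mul_nonsing_inv_cancel_right R₂ C hR₂det]
  · rw [show Jmat n * (A * Jmat n * U₂⁻¹ * Jmat n) * Jmat n
        = Jmat n * A * Jmat n * U₂⁻¹ * (Jmat n * Jmat n) by
      simp only [mul_assoc], hJJ, mul_one, hJAJ,
      mul_assoc, mul_nonsing_inv_cancel_right U₂ R₂ hU₂det]
  · intro i j hij
    rw [Jmat_mul, mul_Jmat]
    simp only [submatrix_apply, id]
    exact hU₂ _ _ (by simpa using Fin.rev_lt_rev.mpr hij)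
  · intro i j hij
    exact hinvR hij
  · intro i
    have h1 : (R₂ * R₂⁻¹) i i = 1 := by rw [hRRinv]; simp
    rw [mul_apply] at h1
    rw [Finset.sum_eq_single i (fun k _ hk => ?_) (by simp)] at h1
    · rwa [hR₂diag i, one_mul] at h1
    · rcases lt_or_gt_of_ne hk with h | h
      · rw [hR₂ i k h, zero_mul]
      · rw [hinvR (show (i : Fin n) < k from h), mul_zero]
end

section
/- The variety Γ₂ is preserved by conjugation by elements of G_-: if L ∈ Γ₂ and g ∈ G_-, then g L g^{-1} ∈ Γ₂. Explicitly, if L = [[U,J],[V,W]] is invertible with L^{-1} = [[JWJ, −J],[V', JUJ]] for some V', and g = [[A,0],[B,JAJ]] ∈ G_-, then gLg^{-1} again has upper-right block J, its inverse has upper-right block −J, and the block relations (upper-left block of (gLg^{-1})^{-1}) = J·(lower-right block of gLg^{-1})·J and (lower-right block of (gLg^{-1})^{-1}) = J·(upper-left block of gLg^{-1})·J hold. -/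
open Matrix

/-- The variety `Γ₂`: invertible `L = [[U, J],[*, W]]` whose inverse has the form
`[[JWJ, −J],[*, JUJ]]`. -/
noncomputable def Gamma₂ (n : ℕ) : Set (Matrix (Fin n ⊕ Fin n) (Fin n ⊕ Fin n) ℝ) :=
  { L | IsUnit L ∧
      Matrix.toBlocks₁₂ L = Jmat n ∧
      Matrix.toBlocks₁₂ L⁻¹ = -(Jmat n) ∧
      Matrix.toBlocks₁₁ L⁻¹ = Jmat n * Matrix.toBlocks₂₂ L * Jmat n ∧
      Matrix.toBlocks₂₂ L⁻¹ = Jmat n * Matrix.toBlocks₁₁ L * Jmat n }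

/-- `Γ₂` is preserved by conjugation by elements of `G₋`: if `L ∈ Γ₂` and
`g = [[A,0],[B,JAJ]]` is invertible, then `g L g⁻¹ ∈ Γ₂`. -/
theorem Gamma₂_preserved_by_Gminus (n : ℕ) (hn : 1 ≤ n)
    (L : Matrix (Fin n ⊕ Fin n) (Fin n ⊕ Fin n) ℝ) (hL : L ∈ Gamma₂ n)
    (A B : Matrix (Fin n) (Fin n) ℝ)
    (hg : IsUnit (fromBlocks A 0 B (Jmat n * A * Jmat n))) :
    (fromBlocks A 0 B (Jmat n * A * Jmat n)) * L *
        (fromBlocks A 0 B (Jmat n * A * Jmat n))⁻¹ ∈ Gamma₂ n := by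
  obtain ⟨hLu, h12, h12', h11, h22⟩ := hL
  set J : Matrix (Fin n) (Fin n) ℝ := Jmat n with hJdef
  have hJJ : J * J = 1 := Jmat_mul_Jmat n
  set g : Matrix (Fin n ⊕ Fin n) (Fin n ⊕ Fin n) ℝ := fromBlocks A 0 B (J * A * J) with hgdef
  -- A is a unit
  have hdetg : IsUnit g.det := (Matrix.isUnit_iff_isUnit_det g).mp hg
  have hdetA : IsUnit A.det := by
    rw [hgdef, Matrix.det_fromBlocks_zero₁₂] at hdetg
    exact isUnit_of_mul_isUnit_left hdetg
  have hA : A * A⁻¹ = 1 := Matrix.mul_nonsing_inv A hdetA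
  have hA' : A⁻¹ * A = 1 := Matrix.nonsing_inv_mul A hdetA
  -- cancellation helpers
  have cJ : ∀ Y : Matrix (Fin n) (Fin n) ℝ, J * (J * Y) = Y := fun Y => by
    rw [← Matrix.mul_assoc, hJJ, Matrix.one_mul]
  have cA : ∀ Y : Matrix (Fin n) (Fin n) ℝ, A * (A⁻¹ * Y) = Y := fun Y => by
    rw [← Matrix.mul_assoc, hA, Matrix.one_mul]
  have cA' : ∀ Y : Matrix (Fin n) (Fin n) ℝ, A⁻¹ * (A * Y) = Y := fun Y => by
    rw [← Matrix.mul_assoc, hA', Matrix.one_mul]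
  -- explicit inverse of g
  set X : Matrix (Fin n) (Fin n) ℝ := J * A⁻¹ * J with hXdef
  set C : Matrix (Fin n) (Fin n) ℝ := -(X * B * A⁻¹) with hCdef
  have hginv : g⁻¹ = fromBlocks A⁻¹ 0 C X := by
    apply Matrix.inv_eq_right_inv
    rw [hgdef, Matrix.fromBlocks_multiply]
    have e11 : A * A⁻¹ + 0 * C = 1 := by simp [hA]
    have e12 : A * 0 + 0 * X = 0 := by simp
    have e21 : B * A⁻¹ + J * A * J * C = 0 := by
      rw [hCdef, hXdef, Matrix.mul_neg]
      have : J * A * J * (J * A⁻¹ * J * B * A⁻¹) = B * A⁻¹ := by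
        simp only [Matrix.mul_assoc, cJ, cA]
      rw [this]; simp
    have e22 : B * 0 + J * A * J * X = 1 := by
      rw [hXdef]
      simp only [Matrix.mul_zero, zero_add, Matrix.mul_assoc, cJ, cA, hJJ]
    rw [e11, e12, e21, e22, Matrix.fromBlocks_one]
  -- block decompositions of L and L⁻¹
  set U : Matrix (Fin n) (Fin n) ℝ := toBlocks₁₁ L with hU
  set V : Matrix (Fin n) (Fin n) ℝ := toBlocks₂₁ L with hV
  set W : Matrix (Fin n) (Fin n) ℝ := toBlocks₂₂ L with hW
  set Q : Matrix (Fin n) (Fin n) ℝ := toBlocks₂₁ L⁻¹ with hQ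
  have hLdec : L = fromBlocks U J V W := by
    rw [hU, hV, hW, ← h12]; exact (Matrix.fromBlocks_toBlocks L).symm
  have hLinvdec : L⁻¹ = fromBlocks (J * W * J) (-J) Q (J * U * J) := by
    rw [← h11, hQ, ← h22, ← h12']; exact (Matrix.fromBlocks_toBlocks L⁻¹).symm
  -- inverse of the conjugate
  have hMinv : (g * L * g⁻¹)⁻¹ = g * L⁻¹ * g⁻¹ := by
    rw [Matrix.mul_inv_rev, Matrix.mul_inv_rev, Matrix.nonsing_inv_nonsing_inv g hdetg,
      Matrix.mul_assoc]
  have hAJX : A * J * X = J := by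
    rw [hXdef]; simp only [Matrix.mul_assoc, cJ, cA]
  have hMblocks : g * L * g⁻¹ =
      fromBlocks (A * U * A⁻¹ + A * J * C) (A * J * X)
        ((B * U + J * A * J * V) * A⁻¹ + (B * J + J * A * J * W) * C)
        ((B * J + J * A * J * W) * X) := by
    rw [hgdef, hginv, hLdec, Matrix.fromBlocks_multiply, Matrix.fromBlocks_multiply]
    simp only [Matrix.zero_mul, Matrix.mul_zero, add_zero, zero_add]
  have hMinvblocks : (g * L * g⁻¹)⁻¹ =
      fromBlocks (A * (J * W * J) * A⁻¹ + A * (-J) * C) (A * (-J) * X)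
        ((B * (J * W * J) + J * A * J * Q) * A⁻¹ + (B * (-J) + J * A * J * (J * U * J)) * C)
        ((B * (-J) + J * A * J * (J * U * J)) * X) := by
    rw [hMinv, hgdef, hginv, hLinvdec, Matrix.fromBlocks_multiply, Matrix.fromBlocks_multiply]
    simp only [Matrix.zero_mul, Matrix.mul_zero, add_zero, zero_add]
  have hJd : IsUnit J.det :=
    IsUnit.of_mul_eq_one _ (by rw [← Matrix.det_mul, hJJ, Matrix.det_one])
  have hdAinv : IsUnit A⁻¹.det := Matrix.isUnit_nonsing_inv_det A hdetA
  refine ⟨(hg.mul hLu).mul ?_, ?_, ?_, ?_, ?_⟩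
  · rw [hginv, Matrix.isUnit_iff_isUnit_det, Matrix.det_fromBlocks_zero₁₂]
    have hdX : IsUnit X.det := by
      rw [hXdef]; simp only [Matrix.det_mul]; exact (hJd.mul hdAinv).mul hJd
    exact hdAinv.mul hdX
  · rw [hMblocks, Matrix.toBlocks_fromBlocks₁₂, hAJX]
  · rw [hMinvblocks, Matrix.toBlocks_fromBlocks₁₂]
    rw [Matrix.mul_neg, Matrix.neg_mul, hAJX]
  · rw [hMinvblocks, hMblocks, Matrix.toBlocks_fromBlocks₁₁, Matrix.toBlocks_fromBlocks₂₂]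
    rw [hCdef, hXdef]
    simp only [← hJdef, Matrix.mul_neg, Matrix.neg_mul, Matrix.add_mul, Matrix.mul_add, neg_neg,
      Matrix.mul_assoc, cJ, cA, cA', hJJ, Matrix.mul_one, Matrix.one_mul]
    abel
  · rw [hMinvblocks, hMblocks, Matrix.toBlocks_fromBlocks₂₂, Matrix.toBlocks_fromBlocks₁₁]
    rw [hCdef, hXdef]
    simp only [← hJdef, Matrix.mul_neg, Matrix.neg_mul, Matrix.add_mul, Matrix.mul_add, neg_neg,
      Matrix.mul_assoc, cJ, cA, cA', hJJ, Matrix.mul_one, Matrix.one_mul]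
    abel
end

section
/- Suppose L(t) is a differentiable curve of matrices satisfying L(t) = a(t) L₀ a(t)^{-1} = b(t) L₀ b(t)^{-1}, where a(t), b(t) are differentiable curves of invertible matrices with exp(L₀ t) = a(t)^{-1} b(t), a(0) = b(0) = 1. Then L(t) = −a'(t)a(t)^{-1} + b'(t)b(t)^{-1}, and L(t) satisfies the Lax equation L'(t) = [a'(t)a(t)^{-1}, L(t)]. -/
open Matrix

section aux

attribute [local instance] Matrix.linftyOpNormedAddCommGroup Matrix.linftyOpNormedRing
  Matrix.linftyOpNormedAlgebra

variable {N : ℕ}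

/-- entrywise derivatives give a matrix-valued derivative -/
lemma lax_hasDerivAt_matrix {f : ℝ → Matrix (Fin N) (Fin N) ℝ}
    {f' : Matrix (Fin N) (Fin N) ℝ} {t : ℝ}
    (h : ∀ i j, HasDerivAt (fun s => f s i j) (f' i j) t) :
    HasDerivAt f f' t := by
  have h1 : ∀ s, f s = ∑ i : Fin N, ∑ j : Fin N, f s i j • single i j (1:ℝ) := by
    intro s
    conv_lhs => rw [matrix_eq_sum_single (f s)]
    simp [smul_single]
  have h2 : f' = ∑ i : Fin N, ∑ j : Fin N, f' i j • single i j (1:ℝ) := by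
    conv_lhs => rw [matrix_eq_sum_single f']
    simp [smul_single]
  have hd : HasDerivAt (fun s => ∑ i : Fin N, ∑ j : Fin N, f s i j • single i j (1:ℝ))
      (∑ i : Fin N, ∑ j : Fin N, f' i j • single i j (1:ℝ)) t := by
    refine HasDerivAt.fun_sum fun i _ => HasDerivAt.fun_sum fun j _ => ?_
    exact (h i j).smul_const _
  rw [h2]
  exact hd.congr_of_eventuallyEq (Filter.Eventually.of_forall h1)

/-- matrix-valued derivative gives entrywise derivatives -/
lemma lax_hasDerivAt_entry {f : ℝ → Matrix (Fin N) (Fin N) ℝ}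
    {f' : Matrix (Fin N) (Fin N) ℝ} {t : ℝ} (h : HasDerivAt f f' t) (i j : Fin N) :
    HasDerivAt (fun s => f s i j) (f' i j) t := by
  let e : Matrix (Fin N) (Fin N) ℝ →ₗ[ℝ] ℝ :=
    { toFun := fun M => M i j, map_add' := fun _ _ => rfl, map_smul' := fun _ _ => rfl }
  have he : Continuous e := LinearMap.continuous_of_finiteDimensional e
  have := (LinearMap.toContinuousLinearMap e).hasFDerivAt.comp_hasDerivAt t h
  exact this

lemma lax_key (N : ℕ)
    (L₀ : Matrix (Fin N) (Fin N) ℝ)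
    (a b a' b' L : ℝ → Matrix (Fin N) (Fin N) ℝ)
    (ha : ∀ t, IsUnit (a t)) (hb : ∀ t, IsUnit (b t))
    (hexp : ∀ t, NormedSpace.exp (t • L₀) = (a t)⁻¹ * b t)
    (ha' : ∀ t, ∀ i j, HasDerivAt (fun s => a s i j) (a' t i j) t)
    (hb' : ∀ t, ∀ i j, HasDerivAt (fun s => b s i j) (b' t i j) t)
    (hLa : ∀ t, L t = a t * L₀ * (a t)⁻¹) :
    (∀ t, L t = -(a' t * (a t)⁻¹) + b' t * (b t)⁻¹) ∧
    (∀ t, ∀ i j, HasDerivAt (fun s => L s i j)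
      ((a' t * (a t)⁻¹ * L t - L t * (a' t * (a t)⁻¹)) i j) t) := by
  haveI : CompleteSpace (Matrix (Fin N) (Fin N) ℝ) := FiniteDimensional.complete ℝ _
  have hA : ∀ t, HasDerivAt a (a' t) t := fun t => lax_hasDerivAt_matrix (ha' t)
  have hB : ∀ t, HasDerivAt b (b' t) t := fun t => lax_hasDerivAt_matrix (hb' t)
  have haA : ∀ t, a t * (a t)⁻¹ = 1 := fun t =>
    Matrix.mul_nonsing_inv _ ((Matrix.isUnit_iff_isUnit_det _).mp (ha t))
  have hAa : ∀ t, (a t)⁻¹ * a t = 1 := fun t =>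
    Matrix.nonsing_inv_mul _ ((Matrix.isUnit_iff_isUnit_det _).mp (ha t))
  -- b s = a s * exp (s • L₀)
  have hba : ∀ s, b s = a s * NormedSpace.exp (s • L₀) := by
    intro s
    rw [hexp s, ← Matrix.mul_assoc, haA s, Matrix.one_mul]
  -- derivative of the inverse of a
  have hInv : ∀ t, HasDerivAt (fun s => (a s)⁻¹) (-((a t)⁻¹ * a' t * (a t)⁻¹)) t := by
    intro t
    have hu : HasFDerivAt Ring.inverse
        (-(ContinuousLinearMap.mulLeftRight ℝ _ ↑(ha t).unit⁻¹ ↑(ha t).unit⁻¹)) (a t) := by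
      have := hasFDerivAt_ringInverse (𝕜 := ℝ) (ha t).unit
      rwa [(ha t).unit_spec] at this
    have hcomp := hu.comp_hasDerivAt t (hA t)
    have this : HasDerivAt (fun s => (a s)⁻¹)
        ((-(ContinuousLinearMap.mulLeftRight ℝ _ ↑(ha t).unit⁻¹ ↑(ha t).unit⁻¹)) (a' t)) t :=
      hcomp.congr_of_eventuallyEq (Filter.Eventually.of_forall fun s => by
        simp [Function.comp, Matrix.nonsing_inv_eq_ringInverse])
    have hcoe : (↑(ha t).unit⁻¹ : Matrix (Fin N) (Fin N) ℝ) = (a t)⁻¹ := by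
      rw [← Ring.inverse_unit (ha t).unit, (ha t).unit_spec, Matrix.nonsing_inv_eq_ringInverse]
    simpa [hcoe] using this
  constructor
  · intro t
    -- compute b' t via uniqueness of derivatives
    have hE : HasDerivAt (fun s => NormedSpace.exp (s • L₀))
        (L₀ * NormedSpace.exp (t • L₀)) t := hasDerivAt_exp_smul_const' (𝕂 := ℝ) L₀ t
    have hprod : HasDerivAt b
        (a' t * NormedSpace.exp (t • L₀) + a t * (L₀ * NormedSpace.exp (t • L₀))) t := by
      have := (hA t).mul hE
      exact this.congr_of_eventuallyEq (Filter.Eventually.of_forall fun s => (hba s))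
    have hb'eq : b' t = a' t * NormedSpace.exp (t • L₀) + a t * (L₀ * NormedSpace.exp (t • L₀)) :=
      (hB t).unique hprod
    set E := NormedSpace.exp (t • L₀) with hEdef
    have hEunit : E * E⁻¹ = 1 :=
      Matrix.mul_nonsing_inv _ ((Matrix.isUnit_iff_isUnit_det _).mp (Matrix.isUnit_exp _))
    have hbinv : (b t)⁻¹ = E⁻¹ * (a t)⁻¹ := by
      rw [hba t, Matrix.mul_inv_rev]
    rw [hLa t, hb'eq, hbinv]
    have h1 : (a' t * E + a t * (L₀ * E)) * (E⁻¹ * (a t)⁻¹)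
        = a' t * (E * E⁻¹) * (a t)⁻¹ + a t * L₀ * (E * E⁻¹) * (a t)⁻¹ := by noncomm_ring
    rw [h1, hEunit, Matrix.mul_one, mul_one]
    noncomm_ring
  · intro t i j
    have hd : HasDerivAt L
        ((a' t * L₀) * (a t)⁻¹ + (a t * L₀) * -((a t)⁻¹ * a' t * (a t)⁻¹)) t := by
      have := ((hA t).mul_const L₀).mul (hInv t)
      exact this.congr_of_eventuallyEq (Filter.Eventually.of_forall fun s => (hLa s))
    have hval : (a' t * L₀) * (a t)⁻¹ + (a t * L₀) * -((a t)⁻¹ * a' t * (a t)⁻¹)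
        = a' t * (a t)⁻¹ * L t - L t * (a' t * (a t)⁻¹) := by
      rw [hLa t]
      have e1 : a' t * (a t)⁻¹ * (a t * L₀ * (a t)⁻¹) = a' t * ((a t)⁻¹ * a t) * (L₀ * (a t)⁻¹) := by
        noncomm_ring
      have e2 : (a t * L₀) * -((a t)⁻¹ * a' t * (a t)⁻¹)
          = -(a t * L₀ * (a t)⁻¹ * (a' t * (a t)⁻¹)) := by noncomm_ring
      rw [e1, hAa t, Matrix.mul_one, e2]
      noncomm_ring
    rw [hval] at hd
    exact lax_hasDerivAt_entry hd i j

end aux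

/-- If `L(t) = a(t) L₀ a(t)⁻¹ = b(t) L₀ b(t)⁻¹` with `exp(L₀ t) = a(t)⁻¹ b(t)`,
`a(0) = b(0) = 1`, and `a`, `b` differentiable curves of invertible matrices, then
`L(t) = −a'(t)a(t)⁻¹ + b'(t)b(t)⁻¹` and `L` satisfies the Lax equation
`L'(t) = [a'(t)a(t)⁻¹, L(t)]` (entrywise). -/
theorem lax_flow_from_factorization (N : ℕ)
    (L₀ : Matrix (Fin N) (Fin N) ℝ)
    (a b a' b' L : ℝ → Matrix (Fin N) (Fin N) ℝ)
    (ha : ∀ t, IsUnit (a t)) (hb : ∀ t, IsUnit (b t))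
    (hexp : ∀ t, NormedSpace.exp (t • L₀) = (a t)⁻¹ * b t)
    (ha0 : a 0 = 1) (hb0 : b 0 = 1)
    (ha' : ∀ t, ∀ i j, HasDerivAt (fun s => a s i j) (a' t i j) t)
    (hb' : ∀ t, ∀ i j, HasDerivAt (fun s => b s i j) (b' t i j) t)
    (hLa : ∀ t, L t = a t * L₀ * (a t)⁻¹)
    (hLb : ∀ t, L t = b t * L₀ * (b t)⁻¹) :
    (∀ t, L t = -(a' t * (a t)⁻¹) + b' t * (b t)⁻¹) ∧
    (∀ t, ∀ i j, HasDerivAt (fun s => L s i j)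
      ((a' t * (a t)⁻¹ * L t - L t * (a' t * (a t)⁻¹)) i j) t) := by
  exact lax_key N L₀ a b a' b' L ha hb hexp ha' hb' hLa
end

section
/- The change of variables Q_i = −e^{q_i − q_{i+1}} (1 ≤ i < n), Q_n = −e^{q_n}, z_i = exp( p_i + ½ log((1 + e^{q_{i−1}−q_i})/(1 + e^{q_i−q_{i+1}})) ) (with conventions q₀ = −∞, i.e. e^{q₀ − q₁} = 0, and q_{n+1} = 0) transforms the canonical Poisson brackets {q_i, p_j} = δ_{ij}, {q_i,q_j} = {p_i,p_j} = 0 into the brackets {Q_i, Q_j} = {z_i, z_j} = 0, {Q_i, z_i} = Q_i z_i, {Q_i, z_{i+1}} = −Q_i z_{i+1}, {Q_i, z_j} = 0 for j ≠ i, i+1. -/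
/-- Canonical Poisson bracket of two functions of `(q₁,q₂,p₁,p₂)` on `ℝ⁴` (n = 2). -/
noncomputable def pb (f g : ℝ → ℝ → ℝ → ℝ → ℝ) (q₁ q₂ p₁ p₂ : ℝ) : ℝ :=
  (deriv (fun x => f x q₂ p₁ p₂) q₁) * (deriv (fun x => g q₁ q₂ x p₂) p₁) +
  (deriv (fun x => f q₁ x p₁ p₂) q₂) * (deriv (fun x => g q₁ q₂ p₁ x) p₂) -
  (deriv (fun x => f q₁ q₂ x p₂) p₁) * (deriv (fun x => g x q₂ p₁ p₂) q₁) -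
  (deriv (fun x => f q₁ q₂ p₁ x) p₂) * (deriv (fun x => g q₁ x p₁ p₂) q₂)

/-- `Q₁ = −e^{q₁−q₂}`. -/
noncomputable def Qv₁ (q₁ q₂ p₁ p₂ : ℝ) : ℝ := -Real.exp (q₁ - q₂)

/-- `Q₂ = −e^{q₂}` (here `n = 2`, with `q₃ = 0`). -/
noncomputable def Qv₂ (q₁ q₂ p₁ p₂ : ℝ) : ℝ := -Real.exp q₂

/-- `z₁ = exp(p₁ + ½ log((1 + e^{q₀−q₁})/(1 + e^{q₁−q₂})))` with `q₀ = −∞`. -/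
noncomputable def zv₁ (q₁ q₂ p₁ p₂ : ℝ) : ℝ :=
  Real.exp (p₁ + (1 / 2) * Real.log ((1 + 0) / (1 + Real.exp (q₁ - q₂))))

/-- `z₂ = exp(p₂ + ½ log((1 + e^{q₁−q₂})/(1 + e^{q₂})))` with `q₃ = 0`. -/
noncomputable def zv₂ (q₁ q₂ p₁ p₂ : ℝ) : ℝ :=
  Real.exp (p₂ + (1 / 2) * Real.log ((1 + Real.exp (q₁ - q₂)) / (1 + Real.exp q₂)))

lemma hlog_add (a x : ℝ) :
    HasDerivAt (fun t : ℝ => Real.log (1 + Real.exp (t - a)))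
      (Real.exp (x - a) / (1 + Real.exp (x - a))) x := by
  have h3 := (((hasDerivAt_id x).sub_const a).exp).const_add 1
  have h4 := h3.log (by positivity)
  simpa [mul_comm, div_eq_mul_inv] using h4

lemma hlog_sub (a x : ℝ) :
    HasDerivAt (fun t : ℝ => Real.log (1 + Real.exp (a - t)))
      (-(Real.exp (a - x) / (1 + Real.exp (a - x)))) x := by
  have h1 : HasDerivAt (fun t : ℝ => a - t) (-1) x := by
    simpa using (hasDerivAt_id x).const_sub a
  have h3 := (h1.exp).const_add 1
  have h4 := h3.log (by positivity)
  have : Real.exp (a - x) * -1 / (1 + Real.exp (a - x))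
      = -(Real.exp (a - x) / (1 + Real.exp (a - x))) := by ring
  rwa [this] at h4

lemma hlog_id (x : ℝ) :
    HasDerivAt (fun t : ℝ => Real.log (1 + Real.exp t))
      (Real.exp x / (1 + Real.exp x)) x := by
  have h3 := (Real.hasDerivAt_exp x).const_add 1
  have h4 := h3.log (by positivity)
  simpa [mul_comm, div_eq_mul_inv] using h4

lemma zv₁_eq (q₁ q₂ p₁ p₂ : ℝ) :
    zv₁ q₁ q₂ p₁ p₂
      = Real.exp (p₁ - 1 / 2 * Real.log (1 + Real.exp (q₁ - q₂))) := by
  have h : Real.log ((1 + 0) / (1 + Real.exp (q₁ - q₂)))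
      = -Real.log (1 + Real.exp (q₁ - q₂)) := by
    rw [show ((1:ℝ) + 0) = 1 by ring, one_div, Real.log_inv]
  rw [zv₁, h]; ring_nf

lemma zv₂_eq (q₁ q₂ p₁ p₂ : ℝ) :
    zv₂ q₁ q₂ p₁ p₂
      = Real.exp (p₂ + 1 / 2 * (Real.log (1 + Real.exp (q₁ - q₂)) - Real.log (1 + Real.exp q₂))) := by
  have h1 : (1 + Real.exp (q₁ - q₂)) ≠ 0 := by positivity
  have h2 : (1 + Real.exp q₂) ≠ 0 := by positivity
  rw [zv₂, Real.log_div h1 h2]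

/-- For `n = 2`, the change of variables transforms the canonical Poisson brackets
into `{Q_i,Q_j} = {z_i,z_j} = 0`, `{Q_i,z_i} = Q_i z_i`, `{Q_i,z_{i+1}} = −Q_i z_{i+1}`,
`{Q_i,z_j} = 0` for `j ≠ i, i+1`. -/
theorem poisson_brackets_of_change_of_variables :
    ∀ q₁ q₂ p₁ p₂ : ℝ,
      pb Qv₁ Qv₂ q₁ q₂ p₁ p₂ = 0 ∧
      pb zv₁ zv₂ q₁ q₂ p₁ p₂ = 0 ∧
      pb Qv₁ zv₁ q₁ q₂ p₁ p₂ = Qv₁ q₁ q₂ p₁ p₂ * zv₁ q₁ q₂ p₁ p₂ ∧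
      pb Qv₁ zv₂ q₁ q₂ p₁ p₂ = -(Qv₁ q₁ q₂ p₁ p₂ * zv₂ q₁ q₂ p₁ p₂) ∧
      pb Qv₂ zv₂ q₁ q₂ p₁ p₂ = Qv₂ q₁ q₂ p₁ p₂ * zv₂ q₁ q₂ p₁ p₂ ∧
      pb Qv₂ zv₁ q₁ q₂ p₁ p₂ = 0 := by
  intro q₁ q₂ p₁ p₂
  set E := Real.exp (q₁ - q₂) with hE
  set F := Real.exp q₂ with hF
  have hEpos : 0 < E := Real.exp_pos _
  have hFpos : 0 < F := Real.exp_pos _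
  have h1E : (0:ℝ) < 1 + E := by linarith
  have h1F : (0:ℝ) < 1 + F := by linarith
  set z1 := zv₁ q₁ q₂ p₁ p₂ with hz1
  set z2 := zv₂ q₁ q₂ p₁ p₂ with hz2
  -- derivatives of Qv₁
  have dQ1q1 : deriv (fun x => Qv₁ x q₂ p₁ p₂) q₁ = -E := by
    have := (((hasDerivAt_id q₁).sub_const q₂).exp).neg
    simpa [Qv₁, hE] using this.deriv
  have dQ1q2 : deriv (fun x => Qv₁ q₁ x p₁ p₂) q₂ = E := by
    have h1 : HasDerivAt (fun t : ℝ => q₁ - t) (-1) q₂ := by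
      simpa using (hasDerivAt_id q₂).const_sub q₁
    have := (h1.exp).neg
    have h2 : -(Real.exp (q₁ - q₂) * -1) = E := by rw [hE]; ring
    simpa [Qv₁, h2] using this.deriv
  have dQ1p1 : deriv (fun x => Qv₁ q₁ q₂ x p₂) p₁ = 0 := by
    simp [Qv₁]
  have dQ1p2 : deriv (fun x => Qv₁ q₁ q₂ p₁ x) p₂ = 0 := by
    simp [Qv₁]
  -- derivatives of Qv₂
  have dQ2q1 : deriv (fun x => Qv₂ x q₂ p₁ p₂) q₁ = 0 := by
    simp [Qv₂]
  have dQ2q2 : deriv (fun x => Qv₂ q₁ x p₁ p₂) q₂ = -F := by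
    have := (Real.hasDerivAt_exp q₂).neg
    simpa [Qv₂, hF] using this.deriv
  have dQ2p1 : deriv (fun x => Qv₂ q₁ q₂ x p₂) p₁ = 0 := by
    simp [Qv₂]
  have dQ2p2 : deriv (fun x => Qv₂ q₁ q₂ p₁ x) p₂ = 0 := by
    simp [Qv₂]
  -- derivatives of zv₁
  have fz1q1 : (fun x => zv₁ x q₂ p₁ p₂)
      = fun x => Real.exp (p₁ - 1 / 2 * Real.log (1 + Real.exp (x - q₂))) := by
    funext x; exact zv₁_eq x q₂ p₁ p₂
  have fz1q2 : (fun x => zv₁ q₁ x p₁ p₂)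
      = fun x => Real.exp (p₁ - 1 / 2 * Real.log (1 + Real.exp (q₁ - x))) := by
    funext x; exact zv₁_eq q₁ x p₁ p₂
  have z1val : z1 = Real.exp (p₁ - 1 / 2 * Real.log (1 + E)) := zv₁_eq q₁ q₂ p₁ p₂
  have dz1q1 : deriv (fun x => zv₁ x q₂ p₁ p₂) q₁ = z1 * (-(1 / 2 * (E / (1 + E)))) := by
    rw [fz1q1]
    have h := (((hlog_add q₂ q₁).const_mul (1/2)).const_sub p₁).exp
    rw [z1val]
    have e : Real.exp (p₁ - 1 / 2 * Real.log (1 + Real.exp (q₁ - q₂))) *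
        -(1 / 2 * (Real.exp (q₁ - q₂) / (1 + Real.exp (q₁ - q₂))))
        = Real.exp (p₁ - 1 / 2 * Real.log (1 + E)) * (-(1 / 2 * (E / (1 + E)))) := by
      rw [hE]
    simpa [e] using h.deriv
  have dz1q2 : deriv (fun x => zv₁ q₁ x p₁ p₂) q₂ = z1 * (1 / 2 * (E / (1 + E))) := by
    rw [fz1q2]
    have h := (((hlog_sub q₁ q₂).const_mul (1/2)).const_sub p₁).exp
    rw [z1val]
    have e : Real.exp (p₁ - 1 / 2 * Real.log (1 + Real.exp (q₁ - q₂))) *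
        -(1 / 2 * -(Real.exp (q₁ - q₂) / (1 + Real.exp (q₁ - q₂))))
        = Real.exp (p₁ - 1 / 2 * Real.log (1 + E)) * (1 / 2 * (E / (1 + E))) := by
      rw [hE]; ring
    simpa [e] using h.deriv
  have dz1p1 : deriv (fun x => zv₁ q₁ q₂ x p₂) p₁ = z1 := by
    have fz : (fun x => zv₁ q₁ q₂ x p₂)
        = fun x => Real.exp (x - 1 / 2 * Real.log (1 + E)) := by
      funext x; exact zv₁_eq q₁ q₂ x p₂
    rw [fz]
    have h := ((hasDerivAt_id p₁).sub_const (1 / 2 * Real.log (1 + E))).exp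
    rw [z1val]
    simpa using h.deriv
  have dz1p2 : deriv (fun x => zv₁ q₁ q₂ p₁ x) p₂ = 0 := by
    simp [zv₁]
  -- derivatives of zv₂
  have fz2q1 : (fun x => zv₂ x q₂ p₁ p₂)
      = fun x => Real.exp (p₂ + 1 / 2 * (Real.log (1 + Real.exp (x - q₂)) - Real.log (1 + F))) := by
    funext x; exact zv₂_eq x q₂ p₁ p₂
  have fz2q2 : (fun x => zv₂ q₁ x p₁ p₂)
      = fun x => Real.exp (p₂ + 1 / 2 * (Real.log (1 + Real.exp (q₁ - x)) - Real.log (1 + Real.exp x))) := by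
    funext x; exact zv₂_eq q₁ x p₁ p₂
  have z2val : z2 = Real.exp (p₂ + 1 / 2 * (Real.log (1 + E) - Real.log (1 + F))) :=
    zv₂_eq q₁ q₂ p₁ p₂
  have dz2q1 : deriv (fun x => zv₂ x q₂ p₁ p₂) q₁ = z2 * (1 / 2 * (E / (1 + E))) := by
    rw [fz2q1]
    have h := ((((hlog_add q₂ q₁).sub_const (Real.log (1 + F))).const_mul (1/2)).const_add p₂).exp
    rw [z2val]
    have e : Real.exp (p₂ + 1 / 2 * (Real.log (1 + Real.exp (q₁ - q₂)) - Real.log (1 + F))) *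
        (1 / 2 * (Real.exp (q₁ - q₂) / (1 + Real.exp (q₁ - q₂))))
        = Real.exp (p₂ + 1 / 2 * (Real.log (1 + E) - Real.log (1 + F))) * (1 / 2 * (E / (1 + E))) := by
      rw [hE]
    simpa [e] using h.deriv
  have dz2q2 : deriv (fun x => zv₂ q₁ x p₁ p₂) q₂
      = z2 * (1 / 2 * (-(E / (1 + E)) - F / (1 + F))) := by
    rw [fz2q2]
    have h := ((((hlog_sub q₁ q₂).sub (hlog_id q₂)).const_mul (1/2)).const_add p₂).exp
    rw [z2val]
    have e : Real.exp (p₂ + 1 / 2 * (Real.log (1 + Real.exp (q₁ - q₂)) - Real.log (1 + Real.exp q₂))) *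
        (1 / 2 * (-(Real.exp (q₁ - q₂) / (1 + Real.exp (q₁ - q₂))) - Real.exp q₂ / (1 + Real.exp q₂)))
        = Real.exp (p₂ + 1 / 2 * (Real.log (1 + E) - Real.log (1 + F))) *
          (1 / 2 * (-(E / (1 + E)) - F / (1 + F))) := by
      rw [hE, hF]
    simpa [e] using h.deriv
  have dz2p1 : deriv (fun x => zv₂ q₁ q₂ x p₂) p₁ = 0 := by
    simp [zv₂]
  have dz2p2 : deriv (fun x => zv₂ q₁ q₂ p₁ x) p₂ = z2 := by
    have fz : (fun x => zv₂ q₁ q₂ p₁ x)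
        = fun x => Real.exp (x + 1 / 2 * (Real.log (1 + E) - Real.log (1 + F))) := by
      funext x; exact zv₂_eq q₁ q₂ p₁ x
    rw [fz]
    have h := ((hasDerivAt_id p₂).add_const (1 / 2 * (Real.log (1 + E) - Real.log (1 + F)))).exp
    rw [z2val]
    simpa using h.deriv
  refine ⟨?_, ?_, ?_, ?_, ?_, ?_⟩
  · rw [pb, dQ1q1, dQ1q2, dQ1p1, dQ1p2, dQ2q1, dQ2q2, dQ2p1, dQ2p2]; ring
  · rw [pb, dz1q1, dz1q2, dz1p1, dz1p2, dz2q1, dz2q2, dz2p1, dz2p2]; ring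
  · rw [pb, dQ1q1, dQ1q2, dQ1p1, dQ1p2, dz1q1, dz1q2, dz1p1, dz1p2]
    simp only [Qv₁, ← hE]; ring
  · rw [pb, dQ1q1, dQ1q2, dQ1p1, dQ1p2, dz2q1, dz2q2, dz2p1, dz2p2]
    simp only [Qv₁, ← hE]; ring
  · rw [pb, dQ2q1, dQ2q2, dQ2p1, dQ2p2, dz2q1, dz2q2, dz2p1, dz2p2]
    simp only [Qv₂, ← hF]; ring
  · rw [pb, dQ2q1, dQ2q2, dQ2p1, dQ2p2, dz1q1, dz1q2, dz1p1, dz1p2]; ring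
end

section
/- For n = 2, in canonical variables the Hamiltonian H = (1−Q₁)z₁ + (1−Q₂)z₂ + (1−Q₁)z₂^{-1} + z₁^{-1}, under the substitution Q₁ = −e^{q₁−q₂}, Q₂ = −e^{q₂}, z₁ = e^{p₁}·((1)/(1+e^{q₁−q₂}))^{1/2}, z₂ = e^{p₂}·((1+e^{q₁−q₂})/(1+e^{q₂}))^{1/2}, equals 2cosh(p₁)·√(1+e^{q₁−q₂}) + 2cosh(p₂)·√(1+e^{q₁−q₂})·√(1+e^{q₂}). -/
/-- For `n = 2`, in canonical variables the Hamiltonian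
`H = (1−Q₁)z₁ + (1−Q₂)z₂ + (1−Q₁)z₂⁻¹ + z₁⁻¹` equals
`2cosh(p₁)√(1+e^{q₁−q₂}) + 2cosh(p₂)√(1+e^{q₁−q₂})√(1+e^{q₂})`. -/
theorem hamiltonian_canonical_form_n2 (q₁ q₂ p₁ p₂ : ℝ) :
    let Q₁ : ℝ := -Real.exp (q₁ - q₂)
    let Q₂ : ℝ := -Real.exp q₂
    let z₁ : ℝ := Real.exp p₁ * Real.sqrt (1 / (1 + Real.exp (q₁ - q₂)))
    let z₂ : ℝ := Real.exp p₂ *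
      Real.sqrt ((1 + Real.exp (q₁ - q₂)) / (1 + Real.exp q₂))
    (1 - Q₁) * z₁ + (1 - Q₂) * z₂ + (1 - Q₁) * z₂⁻¹ + z₁⁻¹ =
      2 * Real.cosh p₁ * Real.sqrt (1 + Real.exp (q₁ - q₂)) +
      2 * Real.cosh p₂ * Real.sqrt (1 + Real.exp (q₁ - q₂)) *
        Real.sqrt (1 + Real.exp q₂) := by
  intro Q₁ Q₂ z₁ z₂
  have ha : (0:ℝ) < 1 + Real.exp (q₁ - q₂) := by positivity
  have hb : (0:ℝ) < 1 + Real.exp q₂ := by positivity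
  simp only [Q₁, Q₂, z₁, z₂, Real.sqrt_div ha.le, Real.cosh_eq,
    Real.sqrt_one, one_div, Real.sqrt_inv, sub_neg_eq_add]
  rw [Real.exp_neg, Real.exp_neg]
  set A := Real.sqrt (1 + Real.exp (q₁ - q₂)) with hA
  set B := Real.sqrt (1 + Real.exp q₂) with hB
  have hA0 : 0 < A := Real.sqrt_pos.2 ha
  have hB0 : 0 < B := Real.sqrt_pos.2 hb
  have sa : A ^ 2 = 1 + Real.exp (q₁ - q₂) := Real.sq_sqrt ha.le
  have sb : B ^ 2 = 1 + Real.exp q₂ := Real.sq_sqrt hb.le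
  rw [← sa, ← sb]
  have he1 : Real.exp p₁ ≠ 0 := Real.exp_ne_zero _
  have he2 : Real.exp p₂ ≠ 0 := Real.exp_ne_zero _
  field_simp
  ring
end

section
/- For n = 2, the Bäcklund transformation Q₁⁺ = (z₁²/(z₂ − Q₁z₁)²)·Q₁, Q₂⁺ = (z₂ − Q₁z₁)·z₂·Q₂, z₁⁺ = (1/(1−Q₁⁺))·(z₁z₂/(z₂ − Q₁z₁)), z₂⁺ = ((1−Q₁⁺)/(1−Q₂⁺))·(z₂ − Q₁z₁) preserves the Hamiltonian: (1−Q₁⁺)z₁⁺ + (1−Q₂⁺)z₂⁺ + (1−Q₁⁺)(z₂⁺)^{-1} + (z₁⁺)^{-1} = (1−Q₁)z₁ + (1−Q₂)z₂ + (1−Q₁)z₂^{-1} + z₁^{-1}. -/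
/-!
Put `M = z₂ − Q₁z₁`. Each of the four transformed terms collapses, because the factors
`1 − Q₁⁺` and `1 − Q₂⁺` cancel, to `z₁z₂/M`, `(1 − Q₁⁺)M`, `(1 − Q₂⁺)/M` and `(1 − Q₁⁺)M/(z₁z₂)`.
Substituting `(1 − Q₁⁺)M = M − z₁²Q₁/M` and `(1 − Q₂⁺)/M = 1/M − z₂Q₂` leaves an identity
of rational functions whose denominators are `M`, `z₁` and `z₂`.
-/

section Backlund

variable {K : Type*} [Field K]

theorem backlund_hamiltonian_terms {a b z₁ z₂ M : K} (ha : a ≠ 0) (hb : b ≠ 0) :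
    a * (1 / a * (z₁ * z₂ / M)) + b * (a / b * M) + a * (a / b * M)⁻¹
        + (1 / a * (z₁ * z₂ / M))⁻¹ =
      z₁ * z₂ / M + a * M + b / M + a * M / (z₁ * z₂) := by
  field_simp

theorem backlund_hamiltonian_reduced {z₁ z₂ Q₁ Q₂ M : K} (hz₁ : z₁ ≠ 0) (hz₂ : z₂ ≠ 0)
    (hM₀ : M ≠ 0) (hM : M = z₂ - Q₁ * z₁) :
    z₁ * z₂ / M + (1 - z₁ ^ 2 / M ^ 2 * Q₁) * M + (1 - M * z₂ * Q₂) / M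
        + (1 - z₁ ^ 2 / M ^ 2 * Q₁) * M / (z₁ * z₂) =
      (1 - Q₁) * z₁ + (1 - Q₂) * z₂ + (1 - Q₁) * z₂⁻¹ + z₁⁻¹ := by
  field_simp
  subst hM
  ring

end Backlund

/-- For `n = 2`, the Bäcklund transformation preserves the Hamiltonian
`H = (1−Q₁)z₁ + (1−Q₂)z₂ + (1−Q₁)z₂⁻¹ + z₁⁻¹`. -/
theorem backlund_preserves_hamiltonian_n2 {K : Type*} [Field K]
    (z₁ z₂ Q₁ Q₂ : K) (hz₁ : z₁ ≠ 0) (hz₂ : z₂ ≠ 0) (hM : z₂ - Q₁ * z₁ ≠ 0)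
    (Q₁p Q₂p z₁p z₂p : K)
    (hQ₁p : Q₁p = z₁ ^ 2 / (z₂ - Q₁ * z₁) ^ 2 * Q₁)
    (hQ₂p : Q₂p = (z₂ - Q₁ * z₁) * z₂ * Q₂)
    (h1 : 1 - Q₁p ≠ 0) (h2 : 1 - Q₂p ≠ 0)
    (hz₁p : z₁p = 1 / (1 - Q₁p) * (z₁ * z₂ / (z₂ - Q₁ * z₁)))
    (hz₂p : z₂p = (1 - Q₁p) / (1 - Q₂p) * (z₂ - Q₁ * z₁)) :
    (1 - Q₁p) * z₁p + (1 - Q₂p) * z₂p + (1 - Q₁p) * z₂p⁻¹ + z₁p⁻¹ =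
      (1 - Q₁) * z₁ + (1 - Q₂) * z₂ + (1 - Q₁) * z₂⁻¹ + z₁⁻¹ := by
  subst hz₁p hz₂p
  rw [backlund_hamiltonian_terms h1 h2]
  subst hQ₁p hQ₂p
  exact backlund_hamiltonian_reduced hz₁ hz₂ hM rfl
end
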